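/- arXiv:2212.09419 — 4 statements merged into one kernel-verified Lean document; each statement's English description precedes it below -/
import Mathlib

section
/- Let (D,f) be a filled diagram with columns D = [D^(1),…,D^(ℓ)], and let cycling(D,f) = (D′,f′), where D′ = [D^(2),…,D^(ℓ), D^(1)+1] (the leftmost column moved to the far right and shifted up by one row, D^(1)+1 := {a+1 : a ∈ D^(1)}) and f′ is the filling inherited from f under the natural bijection of cells. Then stat_{(D,f)}(w) = stat_{(D′,f′)}(w) for every w ∈ S_{|D|}, and consequently H_{(D,f)}[X;q,t] = H_{(D′,f′)}[X;q,t]. -/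
open scoped BigOperators Classical

noncomputable section

/-- The coefficient field `𝔽 = ℂ(q,t)`. -/
abbrev Fqt : Type := FractionRing (MvPolynomial (Fin 2) ℂ)

/-- The indeterminate `q` of `𝔽 = ℂ(q,t)`. -/
def qv : Fqt := algebraMap (MvPolynomial (Fin 2) ℂ) Fqt (MvPolynomial.X 0)

/-- The indeterminate `t` of `𝔽 = ℂ(q,t)`. -/
def tv : Fqt := algebraMap (MvPolynomial (Fin 2) ℂ) Fqt (MvPolynomial.X 1)

/-! ### Words and permutations (one-line notation, values `1,…,n`) -/

/-- `w_s`, the `s`-th letter of the word `w` (1-based indexing). -/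
def nthW (w : List ℕ) (s : ℕ) : ℕ := w.getD (s - 1) 0

/-- All permutations of `{1,…,n}` in one-line notation, as a list of words. -/
def PermWords (n : ℕ) : List (List ℕ) := (List.range' 1 n).permutations

/-- `w` is (the one-line notation of) a permutation of `{1,…,n}`. -/
def IsPermList (n : ℕ) (w : List ℕ) : Prop := w.Perm (List.range' 1 n)

/-- The inverse descent set `iDes(w) = Des(w⁻¹)`:
the set of `i` such that `i+1` appears to the left of `i` in `w`. -/
def iDes (w : List ℕ) : Finset ℕ :=
  (Finset.Icc 1 (w.length - 1)).filter fun i => w.idxOf (i + 1) < w.idxOf i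

/-- The modified inverse descent set `¯iDes(w)`. -/
def iDesBar (w : List ℕ) : Finset ℕ :=
  if nthW w w.length = nthW w (w.length - 1) - 1 then (iDes w).erase (nthW w w.length)
  else iDes w

/-- The descent set `Des(w) = {i : w_i > w_{i+1}}`. -/
def desSet (w : List ℕ) : Finset ℕ :=
  (Finset.Icc 1 (w.length - 1)).filter fun i => nthW w (i + 1) < nthW w i

/-- The standardization of a word. -/
def std (w : List ℕ) : List ℕ :=
  (List.range w.length).map fun s =>
    ((List.range w.length).filter fun t =>
      decide (w.getD t 0 < w.getD s 0 ∨ (w.getD t 0 = w.getD s 0 ∧ t ≤ s))).length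

/-- The subword `w_{[a,b]} = w_a w_{a+1} ⋯ w_b` (1-based). -/
def subw (w : List ℕ) (a b : ℕ) : List ℕ := (w.drop (a - 1)).take (b - a + 1)

/-- The restriction `w|_A` of a word to a set of (1-based) positions. -/
def wordAt (w : List ℕ) (A : Finset ℕ) : List ℕ := (A.sort (· ≤ ·)).map fun c => nthW w c

/-! ### Quasisymmetric and symmetric functions
    (formal power series in variables `x_0, x_1, x_2, …` over `𝔽`) -/

/-- The unique weakly increasing word whose content is the monomial `d`. -/
def sortedWord (d : ℕ →₀ ℕ) : List ℕ := (Finsupp.toMultiset d).sort (· ≤ ·)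

/-- Gessel's fundamental quasisymmetric function `F_{n,S}`. -/
def FQS (n : ℕ) (S : Finset ℕ) : MvPowerSeries ℕ Fqt := fun d =>
  if (sortedWord d).length = n ∧
      ∀ i ∈ S, (sortedWord d).getD (i - 1) 0 < (sortedWord d).getD i 0
  then 1 else 0

/-- Complete homogeneous symmetric function `h_d`. -/
def hSym (d : ℕ) : MvPowerSeries ℕ Fqt := FQS d ∅

/-- The decreasing list of the parts of a partition of `n`. -/
def partitionList {n : ℕ} (p : Nat.Partition n) : List ℕ := (p.parts.sort (· ≤ ·)).reverse

/-- Monomial symmetric function `m_ε` of a partition `ε ⊢ n`. -/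
def mSym {n : ℕ} (p : Nat.Partition n) : MvPowerSeries ℕ Fqt := fun d =>
  if Multiset.map (fun v => d v) d.support.val = p.parts then 1 else 0

/-- Cells of the Young diagram of a partition given by its list of row lengths
(French notation, rows indexed from the bottom). -/
def pCells (ρ : List ℕ) : Finset (ℕ × ℕ) :=
  (Finset.range ρ.length).biUnion fun i0 => (Finset.Icc 1 (ρ.getD i0 0)).image fun j => (i0 + 1, j)

/-- Semistandard Young tableaux of shape `ρ` (rows weakly increasing, columns strictly
increasing bottom-to-top) with content monomial `d`; the entry `v+1` corresponds to
the variable indexed by `v`. -/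
def SSYTset (ρ : List ℕ) (d : ℕ →₀ ℕ) : Set ((ℕ × ℕ) → ℕ) :=
  {T | (∀ u, u ∉ pCells ρ → T u = 0) ∧ (∀ u ∈ pCells ρ, 1 ≤ T u) ∧
    (∀ i j, (i, j) ∈ pCells ρ → (i, j + 1) ∈ pCells ρ → T (i, j) ≤ T (i, j + 1)) ∧
    (∀ i j, (i, j) ∈ pCells ρ → (i + 1, j) ∈ pCells ρ → T (i, j) < T (i + 1, j)) ∧
    (∀ v : ℕ, ((pCells ρ).filter fun u => T u = v + 1).card = d v)}

/-- The Schur function `s_ρ` for a partition given by its row lengths. -/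
def schurF (ρ : List ℕ) : MvPowerSeries ℕ Fqt := fun d => ((SSYTset ρ d).ncard : Fqt)

/-! ### Diagrams and filled diagrams -/

/-- A diagram whose columns are intervals: the `j`-th entry `(lo,hi)` means that
column `j` (1-based) occupies rows `lo, lo+1, …, hi`. -/
abbrev Diagram := List (ℕ × ℕ)

/-- The cells `(row, column)` of a diagram. -/
def dCells (D : Diagram) : Finset (ℕ × ℕ) :=
  (Finset.range D.length).biUnion fun j0 =>
    (Finset.Icc (D.getD j0 (1, 0)).1 (D.getD j0 (1, 0)).2).image fun i => (i, j0 + 1)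

/-- `|D|`, the number of cells. -/
def dSize (D : Diagram) : ℕ := (dCells D).card

/-- All rows are `≥ 1` and all columns are nonempty intervals. -/
def ValidDiagram (D : Diagram) : Prop := ∀ c ∈ D, 1 ≤ c.1 ∧ c.1 ≤ c.2

def maxRow (D : Diagram) : ℕ := (D.map Prod.snd).foldr max 0

/-- The cells of `D` listed in reading order: row by row, top row first,
left to right within each row. -/
def readingList (D : Diagram) : List (ℕ × ℕ) :=
  ((List.range (maxRow D)).reverse).flatMap fun i0 =>
    (List.range D.length).filterMap fun j0 =>
      if (D.getD j0 (1, 0)).1 ≤ i0 + 1 ∧ i0 + 1 ≤ (D.getD j0 (1, 0)).2 then some (i0 + 1, j0 + 1)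
      else none

/-- The entry `w_{N_D(u)}` of the word `w` at the cell `u` of `D`. -/
def dEntry (D : Diagram) (w : List ℕ) (u : ℕ × ℕ) : ℕ :=
  w.getD ((readingList D).idxOf u) 0

/-- The number of inversion pairs of cells of `D` with respect to `w`. -/
def invCount (D : Diagram) (w : List ℕ) : ℕ :=
  ((dCells D ×ˢ dCells D).filter fun p =>
    dEntry D w p.2 < dEntry D w p.1 ∧
      ((p.1.1 = p.2.1 ∧ p.1.2 < p.2.2) ∨ (p.1.1 = p.2.1 + 1 ∧ p.2.2 < p.1.2))).card

/-- The descent cells of `D` with respect to `w`. -/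
def descentCells (D : Diagram) (w : List ℕ) : Finset (ℕ × ℕ) :=
  (dCells D).filter fun u =>
    (u.1 - 1, u.2) ∈ dCells D ∧ dEntry D w (u.1 - 1, u.2) < dEntry D w u

/-- The non-bottom cells of `D`. -/
def nonBottom (D : Diagram) : Finset (ℕ × ℕ) :=
  (dCells D).filter fun u => (u.1 - 1, u.2) ∈ dCells D

/-- `stat_{(D,f)}(w) = inv_D(w) ⋅ maj_{(D,f)}(w)`. -/
def statD (D : Diagram) (f : ℕ × ℕ → Fqt) (w : List ℕ) : Fqt :=
  qv ^ invCount D w * ∏ u ∈ descentCells D w, f u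

/-- The generalized modified Macdonald polynomial `H_{(D,f)}[X;q,t]`. -/
def genH (D : Diagram) (f : ℕ × ℕ → Fqt) : MvPowerSeries ℕ Fqt :=
  ((PermWords (dSize D)).map fun w => statD D f w • FQS (dSize D) (iDes w)).sum

/-- The subword of `w` on the positions `{N_D(u) : u ∈ E}` where
`E = {u ∈ D : P u}`, i.e. `w ↓^D_E`. -/
def wRestrict (D : Diagram) (P : ℕ × ℕ → Bool) (w : List ℕ) : List ℕ :=
  ((readingList D).zip w).filterMap fun p => if P p.1 then some p.2 else none

/-! ### Partitions, standard fillings, (modified) Macdonald polynomials -/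

/-- A partition presented by its (weakly decreasing, positive) column lengths. -/
def IsPartitionCols (a : List ℕ) : Prop := a.Pairwise (· ≥ ·) ∧ ∀ x ∈ a, 1 ≤ x

/-- The Young diagram of a partition given by its column lengths. -/
def colDiagram (a : List ℕ) : Diagram := a.map fun h => (1, h)

/-- The standard filling `f^st_μ(u) = q^{-arm(u)} t^{leg(u)+1}` of the partition with
column lengths `a`. -/
def fstFill (a : List ℕ) : ℕ × ℕ → Fqt := fun u =>
  qv ^ (-((((Finset.range a.length).filter fun j0 => u.2 ≤ j0 ∧ u.1 ≤ a.getD j0 0).card : ℤ))) *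
    tv ^ (a.getD (u.2 - 1) 0 - u.1 + 1)

/-- `T_μ = ∏_{(i,j) ∈ μ} t^{i-1} q^{j-1}`. -/
def Tstat (a : List ℕ) : Fqt :=
  ∏ u ∈ dCells (colDiagram a), (tv ^ (u.1 - 1) * qv ^ (u.2 - 1))

/-- The modified Macdonald polynomial `H_μ[X;q,t]` of the partition with column lengths `a`. -/
def Hmac (a : List ℕ) : MvPowerSeries ℕ Fqt := genH (colDiagram a) (fstFill a)

/-- The Macdonald intersection polynomial
`I_{λ,μ}[X;q,t] = (T_λ H_μ - T_μ H_λ)/(T_λ - T_μ)` (partitions by column lengths). -/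
def Imac (lam mu : List ℕ) : MvPowerSeries ℕ Fqt :=
  (Tstat lam - Tstat mu)⁻¹ • (Tstat lam • Hmac mu - Tstat mu • Hmac lam)

/-! ### Butler permutations -/

/-- The number of arcs of the matching `M(w)` for `w ∈ S_n`. -/
def numArcs (n : ℕ) : ℕ := if n % 2 = 0 then n / 2 + 1 else (n + 1) / 2

/-- The directed arc `α_k(w)` of the matching `M(w)`. -/
def arcW (w : List ℕ) (k : ℕ) : ℕ × ℕ :=
  let n := w.length
  if n % 2 = 0 then
    if k = 1 then (nthW w n, n + 1)
    else if k ≤ n / 2 then (nthW w (n - 2 * (k - 1)), nthW w (n - 2 * (k - 1) + 1))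
    else (0, nthW w 1)
  else
    if k ≤ (n - 1) / 2 then (nthW w (n - 2 * (k - 1) - 1), nthW w (n - 2 * (k - 1)))
    else (0, nthW w 1)

/-- The arc is in the forward direction. -/
def forwardArc (A : ℕ × ℕ) : Bool := decide (A.1 < A.2)

/-- The arc is in the reverse direction. -/
def reverseArc (A : ℕ × ℕ) : Bool := decide (A.2 < A.1)

/-- The two arcs cross. -/
def crossArc (A B : ℕ × ℕ) : Bool :=
  decide ((min A.1 A.2 < min B.1 B.2 ∧ min B.1 B.2 < max A.1 A.2 ∧ max A.1 A.2 < max B.1 B.2) ∨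
    (min B.1 B.2 < min A.1 A.2 ∧ min A.1 A.2 < max B.1 B.2 ∧ max B.1 B.2 < max A.1 A.2))

/-- The arc `A` is nested by the arc `B`. -/
def nestedArc (A B : ℕ × ℕ) : Bool :=
  decide (min B.1 B.2 < min A.1 A.2 ∧ max A.1 A.2 < max B.1 B.2)

/-- `w` is a Butler permutation, i.e. `w ∈ 𝔅_n`. -/
def isButlerB (w : List ℕ) : Bool :=
  let K := numArcs w.length
  let s := (Finset.Icc 1 (K - 1)).filter fun k => crossArc (arcW w k) (arcW w (k + 1)) = false
  if h : s.Nonempty then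
    let k := s.min' h
    (nestedArc (arcW w (k + 1)) (arcW w k) && reverseArc (arcW w k)) ||
      (!nestedArc (arcW w (k + 1)) (arcW w k) && forwardArc (arcW w k))
  else reverseArc (arcW w (K - 1))

/-! ### The column exchange operators `S_j`, `S̄_j`, and cycling -/

/-- The restriction of `(D,f)` to columns `c, c+1` lies in `𝒱(n,m)`. -/
def memVAt (D : Diagram) (f : ℕ × ℕ → Fqt) (c n m : ℕ) : Prop :=
  1 ≤ m ∧ m < n ∧ D.getD (c - 1) (1, 0) = (1, n) ∧ D.getD c (1, 0) = (1, m) ∧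
    ∀ i, 1 < i → i ≤ m → f (i, c) = qv⁻¹ * f (m + 1, c) * f (i, c + 1)

/-- Exchange columns `j` and `j+1` (1-based) of a diagram. -/
def swapCols (j : ℕ) (D : Diagram) : Diagram :=
  (D.set (j - 1) (D.getD j (1, 0))).set j (D.getD (j - 1) (1, 0))

/-- The filling of `S_j(D,f)`, where `m` is the length of column `j+1` of `D`. -/
def SjFill (j m : ℕ) (f : ℕ × ℕ → Fqt) : ℕ × ℕ → Fqt := fun u =>
  if u.2 = j then f (u.1, j + 1)
  else if u.2 = j + 1 then (if u.1 = m + 1 then qv⁻¹ * f (m + 1, j) else f (u.1, j))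
  else f u

/-- The column exchange operator `S_j` on filled diagrams. -/
def SjOp (j : ℕ) (Df : Diagram × (ℕ × ℕ → Fqt)) : Diagram × (ℕ × ℕ → Fqt) :=
  (swapCols j Df.1, SjFill j (Df.1.getD j (1, 0)).2 Df.2)

/-- The restriction of `(D,f)` to columns `c, c+1` lies in `𝒱̄(n,m;α)`. -/
def memVbarAt (D : Diagram) (f : ℕ × ℕ → Fqt) (c n m : ℕ) (α : Fqt) : Prop :=
  1 ≤ m ∧ m < n ∧ D.getD (c - 1) (1, 0) = (1, n) ∧ D.getD c (1, 0) = (2, m) ∧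
    qv⁻¹ * f (m + 1, c) = α ∧ ∀ i, 2 < i → i ≤ m → f (i, c) = α * f (i, c + 1)

/-- The filling of `S̄_j(D,f)`, where `m` is the length of column `j+1` of `D`. -/
def SbarFillAt (j m : ℕ) (α : Fqt) (f : ℕ × ℕ → Fqt) : ℕ × ℕ → Fqt := fun u =>
  if u.2 = j then (if u.1 = 2 then α⁻¹ * f (2, j) else f (u.1, j + 1))
  else if u.2 = j + 1 then (if u.1 = m + 1 then α else f (u.1, j))
  else f u

/-- Shapes for `S̄_j`: columns `(1,n), (2,m)` become `(1,m), (2,n)`. -/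
def sbarCols (j : ℕ) (D : Diagram) : Diagram :=
  (D.set (j - 1) (1, (D.getD j (1, 0)).2)).set j (2, (D.getD (j - 1) (1, 0)).2)

/-- The operator `S̄_j` on filled diagrams. -/
def SbarOp (j : ℕ) (α : Fqt) (Df : Diagram × (ℕ × ℕ → Fqt)) : Diagram × (ℕ × ℕ → Fqt) :=
  (sbarCols j Df.1, SbarFillAt j (Df.1.getD j (1, 0)).2 α Df.2)

/-- The cycling operator on diagrams: the leftmost column is moved to the far right
and shifted up by one row. -/
def cycD (D : Diagram) : Diagram :=
  D.tail ++ [((D.headD (1, 0)).1 + 1, (D.headD (1, 0)).2 + 1)]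

/-- The filling inherited under cycling. -/
def cycFill (D : Diagram) (f : ℕ × ℕ → Fqt) : ℕ × ℕ → Fqt := fun u =>
  if u.2 = D.length then f (u.1 - 1, 1) else f (u.1, u.2 + 1)

/-- The cycling operator on filled diagrams. -/
def cycOp (Df : Diagram × (ℕ × ℕ → Fqt)) : Diagram × (ℕ × ℕ → Fqt) :=
  (cycD Df.1, cycFill Df.1 Df.2)

/-! ### The deformation `𝔇_{λ,μ}` and Butler permutations of type `(λ,μ)` -/

/-- Apply a sequence of column exchange operators, leftmost entry first. -/
def applyS (ks : List ℕ) (Df : Diagram × (ℕ × ℕ → Fqt)) : Diagram × (ℕ × ℕ → Fqt) :=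
  ks.foldl (fun acc k => SjOp k acc) Df

/-- `𝔇_{λ,μ}(μ, f^st_μ)`: here `ν` has column lengths `a`, `λ = ν` minus the top cell of
column `i`, `μ = ν` minus the top cell of column `j` (`i < j`).  The `j`-th column is moved
to the far left, the original `i`-th column to the far right, and then cycling is applied. -/
def deformMu (a : List ℕ) (i j : ℕ) : Diagram × (ℕ × ℕ → Fqt) :=
  let mu := a.set (j - 1) (a.getD (j - 1) 0 - 1)
  cycOp (applyS ((List.range' 1 (j - 1)).reverse ++ List.range' (i + 1) (a.length - 1 - i))
    (colDiagram mu, fstFill mu))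

/-- `𝔇_{λ,μ}(λ, f^st_λ)`: the `j`-th column is moved to the far right, the `i`-th column
to the far left, and then cycling is applied. -/
def deformLa (a : List ℕ) (i j : ℕ) : Diagram × (ℕ × ℕ → Fqt) :=
  let lam := a.set (i - 1) (a.getD (i - 1) 0 - 1)
  cycOp (applyS (List.range' j (a.length - j) ++ (List.range' 1 (i - 1)).reverse)
    (colDiagram lam, fstFill lam))

/-- The subword of `w` governing membership in `𝔅_{λ,μ}`: restrict to the last two
columns of `D_μ` and take positions `a_i - a_j, …, a_i + a_j - 1`. -/
def butlerWordLM (a : List ℕ) (i j : ℕ) (w : List ℕ) : List ℕ :=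
  subw (wRestrict (deformMu a i j).1
      (fun u => decide (u.2 = a.length - 1 ∨ u.2 = a.length)) w)
    (a.getD (i - 1) 0 - a.getD (j - 1) 0) (a.getD (i - 1) 0 + a.getD (j - 1) 0 - 1)

/-- Membership in the set `𝔅_{λ,μ}` of Butler permutations of type `(λ,μ)`. -/
def memButlerLM (a : List ℕ) (i j : ℕ) (w : List ℕ) : Prop :=
  isButlerB (std (butlerWordLM a i j w)) = true

/-- The statistic `stat_{λ,μ}`. -/
def statLM (a : List ℕ) (i j : ℕ) (w : List ℕ) : Fqt :=
  statD (deformMu a i j).1 (deformMu a i j).2 w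

/-! ### LLT polynomials -/

/-- A skew partition, given by the row lengths of the outer and inner shapes. -/
abbrev SkewShape := (List ℕ) × (List ℕ)

/-- The cells of a skew shape. -/
def skCells (s : SkewShape) : List (ℕ × ℕ) :=
  (List.range s.1.length).flatMap fun i0 =>
    (List.range' (s.2.getD i0 0 + 1) (s.1.getD i0 0 - s.2.getD i0 0)).map fun j => (i0 + 1, j)

/-- The cells of a tuple of skew shapes, tagged by the component index (0-based). -/
def tCells (ν : List SkewShape) : List (ℕ × ℕ × ℕ) :=
  (List.range ν.length).flatMap fun k =>
    (skCells (ν.getD k ([], []))).map fun c => (k, c.1, c.2)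

/-- The content `c(u) = i - j` of a cell of a tuple of skew shapes. -/
def contentOf (u : ℕ × ℕ × ℕ) : ℤ := (u.2.1 : ℤ) - (u.2.2 : ℤ)

/-- Reading order comparison: increasing content, ties broken left to right. -/
def lltLe (u v : ℕ × ℕ × ℕ) : Bool :=
  decide (contentOf u < contentOf v ∨
    (contentOf u = contentOf v ∧ (u.1 < v.1 ∨ (u.1 = v.1 ∧ u.2.2 ≤ v.2.2))))

/-- The cells of a tuple of skew shapes in reading order. -/
def lltReading (ν : List SkewShape) : List (ℕ × ℕ × ℕ) := (tCells ν).mergeSort lltLe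

def lltSize (ν : List SkewShape) : ℕ := (tCells ν).length

/-- The entry at the cell `u` of the tableau whose reading word is `w`. -/
def lltEntry (ν : List SkewShape) (w : List ℕ) (u : ℕ × ℕ × ℕ) : ℕ :=
  w.getD ((lltReading ν).idxOf u) 0

/-- `w` is the reading word of a standard Young tableau of shape `ν`. -/
def lltStandard (ν : List SkewShape) (w : List ℕ) : Prop :=
  ∀ u ∈ tCells ν,
    ((u.1, u.2.1, u.2.2 + 1) ∈ tCells ν →
      lltEntry ν w u < lltEntry ν w (u.1, u.2.1, u.2.2 + 1)) ∧
    ((u.1, u.2.1 + 1, u.2.2) ∈ tCells ν →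
      lltEntry ν w u < lltEntry ν w (u.1, u.2.1 + 1, u.2.2))

/-- The number of inversions of the standard tableau with reading word `w`. -/
def lltInv (ν : List SkewShape) (w : List ℕ) : ℕ :=
  ((tCells ν).product (tCells ν)).countP fun p =>
    decide (lltEntry ν w p.2 < lltEntry ν w p.1 ∧
      ((p.1.1 < p.2.1 ∧ contentOf p.1 = contentOf p.2) ∨
        (p.2.1 < p.1.1 ∧ contentOf p.1 = contentOf p.2 + 1)))

/-- The LLT polynomial of a tuple of skew shapes. -/
def LLTpoly (ν : List SkewShape) : MvPowerSeries ℕ Fqt :=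
  (((PermWords (lltSize ν)).filter fun w => decide (lltStandard ν w)).map fun w =>
    (qv ^ lltInv ν w) • FQS (lltSize ν) (iDes w)).sum

/-! ### Ribbons -/

/-- Number of up-steps among the first `p` steps of the ribbon with content
interval `[r, r+s]` and descent set `S`. -/
def ribbonUp (r : ℕ) (S : Finset ℕ) (p : ℕ) : ℕ :=
  ((Finset.Icc (r + 1) (r + p)).filter fun x => x ∈ S).card

/-- The cells of the ribbon `R_{[r,r+s]}(S)`; the cell of content `r + p`. -/
def ribbonCellList (r s : ℕ) (S : Finset ℕ) : List (ℕ × ℕ) :=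
  (List.range (s + 1)).map fun p =>
    (r + s + 1 + ribbonUp r S p, s + 1 - (p - ribbonUp r S p))

/-- The ribbon `R_{[r,r+s]}(S)`: the unique ribbon (as a skew shape) whose cells have
content set `{r, …, r+s}` and whose descent set is `S`. -/
def ribbonR (r s : ℕ) (S : Finset ℕ) : SkewShape :=
  (((List.range (r + s + 1 + ribbonUp r S s)).map fun i0 =>
      (if ((ribbonCellList r s S).filterMap fun u =>
            if u.1 = i0 + 1 then some u.2 else none) = []
        then s + 1
        else ((ribbonCellList r s S).filterMap fun u =>
            if u.1 = i0 + 1 then some u.2 else none).foldr max 0)),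
    ((List.range (r + s + 1 + ribbonUp r S s)).map fun i0 =>
      (if ((ribbonCellList r s S).filterMap fun u =>
            if u.1 = i0 + 1 then some u.2 else none) = []
        then s + 1
        else (((ribbonCellList r s S).filterMap fun u =>
            if u.1 = i0 + 1 then some u.2 else none).foldr min (s + 1)) - 1)))

/-- A single cell of content `a`, as a skew shape. -/
def cellC (a : ℕ) : SkewShape := ribbonR a 0 ∅

/-! ### Laurent polynomials in `q, t` -/

/-- Evaluation of a formal (integer) Laurent polynomial in `q, t`, presented as a list of
terms `(coefficient, q-exponent, t-exponent)`. -/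
def evalLaurent (L : List (ℤ × ℤ × ℤ)) : Fqt :=
  (L.map fun x => (x.1 : Fqt) * qv ^ x.2.1 * tv ^ x.2.2).sum

/-- `c` is a Laurent polynomial in `q` and `t` with nonnegative integer coefficients. -/
def IsNonnegLaurent (c : Fqt) : Prop :=
  ∃ L : List (ℕ × ℤ × ℤ), c = (L.map fun x => (x.1 : Fqt) * qv ^ x.2.1 * tv ^ x.2.2).sum

/-- `c` is a Laurent monomial `q^a t^b`. -/
def IsLaurentMonomial (c : Fqt) : Prop := ∃ e1 e2 : ℤ, c = qv ^ e1 * tv ^ e2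

/-! ### Statistics on words, the operators `γ_x` and `𝒜_k`, super-standard words -/

/-- The major index of a word. -/
def majW (u : List ℕ) : ℕ :=
  ((Finset.Icc 1 (u.length - 1)).filter fun i => nthW u (i + 1) < nthW u i).sum id

/-- The inversion number of a word. -/
def invW (u : List ℕ) : ℕ :=
  (((Finset.Icc 1 u.length) ×ˢ (Finset.Icc 1 u.length)).filter fun p =>
    p.1 < p.2 ∧ nthW u p.2 < nthW u p.1).card

/-- Helper for `γ_x`: `brk` tests whether a letter begins a new block. -/
def gammaGo (brk : ℕ → Bool) : ℕ → List ℕ → List ℕ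
  | h, [] => [h]
  | h, y :: ys => if brk y then h :: gammaGo brk y ys else y :: gammaGo brk h ys

/-- The operator `γ_x`: cut `u` into blocks before each letter smaller (resp. larger) than
`x` according to whether `u_1 < x` (resp. `u_1 > x`), and move the first letter of each
block to the end of the block. -/
def gammaX (x : ℕ) (u : List ℕ) : List ℕ :=
  match u with
  | [] => []
  | h :: rest =>
    gammaGo (fun y => if h < x then decide (y < x) else decide (x < y)) h rest

/-- Assaf's operator `𝒜_k`. -/
def Aop (k : ℕ) (w : List ℕ) : List ℕ := w.take k ++ gammaX (nthW w k) (w.drop k)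

/-- The de-standardization of a permutation. -/
def dst (w : List ℕ) : List ℕ :=
  w.map fun v => 1 + ((iDes w).filter fun i => i < v).card

/-- A word is Yamanouchi. -/
def Yamanouchi (u : List ℕ) : Prop :=
  ∀ p i, 2 ≤ i → (u.drop p).count i ≤ (u.drop p).count (i - 1)

/-- `w` is a super-standard permutation of weight `lam` (given by its list of parts). -/
def IsSSS (lam : List ℕ) (w : List ℕ) : Prop :=
  Yamanouchi (dst w) ∧ ∀ s, 1 ≤ s → (dst w).count s = lam.getD (s - 1) 0

/-- The column lengths of the hook `(n-k, 1^k)`. -/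
def hookCols (n k : ℕ) : List ℕ := (k + 1) :: List.replicate (n - k - 1) 1


/-!
Cycling sends the cell `(i, 1)` to `(i + 1, ℓ)` and every other cell one column to the left.
In reading order `(i + 1, ℓ)` is the last cell of row `i + 1`, immediately followed by row `i`
without its first cell, so this bijection of cells preserves the reading order and hence the
letter of `w` in each cell. It also preserves the attacking pairs counted by `inv` (a pair in
row `i` involving `(i, 1)` becomes a pair between rows `i + 1` and `i`) and the relation
"directly below", so inversions and descents correspond and the fillings agree.
-/
theorem List.idxOf_map_of_injOn {α β : Type*} [BEq α] [LawfulBEq α] [BEq β] [LawfulBEq β]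
    {f : α → β} {s : Set α} (hf : Set.InjOn f s) {l : List α} (hl : ∀ x ∈ l, x ∈ s) {u : α}
    (hu : u ∈ s) :
    (l.map f).idxOf (f u) = l.idxOf u := by
  induction l with
  | nil => rfl
  | cons a l ih =>
    have ha := hl a List.mem_cons_self
    by_cases h : a = u
    · simp [h]
    · rw [List.map_cons, List.idxOf_cons_ne _ (fun hc => h (hf ha hu hc)), List.idxOf_cons_ne _ h,
        ih fun x hx => hl x (List.mem_cons_of_mem a hx)]

lemma mem_dCells {E : Diagram} {u : ℕ × ℕ} :
    u ∈ dCells E ↔ ∃ j0 < E.length,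
      (E.getD j0 (1, 0)).1 ≤ u.1 ∧ u.1 ≤ (E.getD j0 (1, 0)).2 ∧ u.2 = j0 + 1 := by
  simp only [dCells, Finset.mem_biUnion, Finset.mem_range, Finset.mem_image, Finset.mem_Icc]
  constructor
  · rintro ⟨j0, hj0, i, ⟨h1, h2⟩, rfl⟩
    exact ⟨j0, hj0, h1, h2, rfl⟩
  · rintro ⟨j0, hj0, h1, h2, h3⟩
    exact ⟨j0, hj0, u.1, ⟨h1, h2⟩, by rw [← h3]⟩

lemma col_mem_Icc_of_mem_dCells {E : Diagram} {u : ℕ × ℕ} (hu : u ∈ dCells E) :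
    u.2 ∈ Finset.Icc 1 E.length := by
  obtain ⟨j0, hj0, -, -, h3⟩ := mem_dCells.mp hu
  exact Finset.mem_Icc.mpr ⟨by omega, by omega⟩

lemma exists_col_of_mem_dCells {E : Diagram} {u : ℕ × ℕ} (hu : u ∈ dCells E) :
    ∃ c ∈ E, c.1 ≤ u.1 ∧ u.1 ≤ c.2 := by
  obtain ⟨j0, hj0, h1, h2, -⟩ := mem_dCells.mp hu
  refine ⟨E.getD j0 (1, 0), ?_, h1, h2⟩
  rw [List.getD_eq_getElem _ _ hj0]
  exact List.getElem_mem hj0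

lemma one_le_row_of_mem_dCells {E : Diagram} (hE : ValidDiagram E) {u : ℕ × ℕ}
    (hu : u ∈ dCells E) : 1 ≤ u.1 := by
  obtain ⟨c, hc, h1, -⟩ := exists_col_of_mem_dCells hu
  exact (hE c hc).1.trans h1

lemma le_maxRow {E : Diagram} {u : ℕ × ℕ} (hu : u ∈ dCells E) : u.1 ≤ maxRow E := by
  obtain ⟨c, hc, -, h2⟩ := exists_col_of_mem_dCells hu
  exact List.le_max_of_le' 0 (List.mem_map_of_mem hc) h2

def rowCells (E : Diagram) (i0 : ℕ) : List (ℕ × ℕ) :=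
  (List.range E.length).filterMap fun j0 =>
    if (E.getD j0 (1, 0)).1 ≤ i0 + 1 ∧ i0 + 1 ≤ (E.getD j0 (1, 0)).2 then some (i0 + 1, j0 + 1)
    else none

def readingRows (E : Diagram) (R : ℕ) : List (ℕ × ℕ) :=
  (List.range R).reverse.flatMap (rowCells E)

lemma readingRows_succ (E : Diagram) (R : ℕ) :
    readingRows E (R + 1) = rowCells E R ++ readingRows E R := by
  simp [readingRows, List.range_succ]

lemma mem_rowCells {E : Diagram} {i0 : ℕ} {u : ℕ × ℕ} :
    u ∈ rowCells E i0 ↔ u ∈ dCells E ∧ u.1 = i0 + 1 := by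
  rw [rowCells, List.mem_filterMap, mem_dCells]
  constructor
  · rintro ⟨j0, hj0, hu⟩
    split_ifs at hu with h
    cases hu
    exact ⟨⟨j0, List.mem_range.mp hj0, h.1, h.2, rfl⟩, rfl⟩
  · rintro ⟨⟨j0, hj0, h1, h2, h3⟩, hrow⟩
    refine ⟨j0, List.mem_range.mpr hj0, ?_⟩
    rw [if_pos (by omega), ← hrow, ← h3]

lemma mem_dCells_of_mem_readingList {E : Diagram} {u : ℕ × ℕ} (h : u ∈ readingList E) :
    u ∈ dCells E := by
  obtain ⟨i0, -, hu⟩ := List.mem_flatMap.mp h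
  exact (mem_rowCells.mp hu).1

lemma rowCells_eq_nil_of_maxRow_le {E : Diagram} {i0 : ℕ} (h : maxRow E ≤ i0) :
    rowCells E i0 = [] :=
  List.eq_nil_iff_forall_not_mem.mpr fun u hu => by
    have := le_maxRow (mem_rowCells.mp hu).1
    have := (mem_rowCells.mp hu).2
    omega

lemma readingRows_maxRow_add (E : Diagram) (k : ℕ) :
    readingRows E (maxRow E + k) = readingList E := by
  induction k with
  | zero => rfl
  | succ k ih =>
    rw [← add_assoc, readingRows_succ, ih, rowCells_eq_nil_of_maxRow_le (by omega), List.nil_append]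

lemma rowCells_cons (c : ℕ × ℕ) (T : Diagram) (i0 : ℕ) :
    rowCells (c :: T) i0 = (if c.1 ≤ i0 + 1 ∧ i0 + 1 ≤ c.2 then [(i0 + 1, 1)] else []) ++
      (rowCells T i0).map fun u => (u.1, u.2 + 1) := by
  rw [rowCells, List.length_cons, List.range_succ_eq_map, List.filterMap_cons, List.filterMap_map,
    rowCells, List.map_filterMap]
  simp only [List.getD_cons_zero]
  split_ifs <;> simp [apply_ite]

lemma rowCells_append_singleton (T : Diagram) (c : ℕ × ℕ) (i0 : ℕ) :
    rowCells (T ++ [c]) i0 = rowCells T i0 ++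
      (if c.1 ≤ i0 + 1 ∧ i0 + 1 ≤ c.2 then [(i0 + 1, T.length + 1)] else []) := by
  rw [rowCells, List.length_append, List.length_singleton, List.range_succ, List.filterMap_append,
    rowCells]
  congr 1
  · refine List.filterMap_congr fun j0 hj0 => ?_
    rw [List.getD_append _ _ _ _ (List.mem_range.mp hj0)]
  · split_ifs <;> simp_all

lemma readingRows_eq_readingList {E : Diagram} {N : ℕ} (h : maxRow E ≤ N) :
    readingRows E N = readingList E := by
  obtain ⟨k, rfl⟩ := Nat.exists_eq_add_of_le h
  exact readingRows_maxRow_add E k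

lemma dCells_eq_toFinset_readingList {E : Diagram} (hE : ValidDiagram E) :
    dCells E = (readingList E).toFinset := by
  ext u
  refine ⟨fun hu => ?_, fun hu => mem_dCells_of_mem_readingList (List.mem_toFinset.mp hu)⟩
  have hrow := one_le_row_of_mem_dCells hE hu
  refine List.mem_toFinset.mpr (List.mem_flatMap.mpr ⟨u.1 - 1, ?_, mem_rowCells.mpr ⟨hu, by omega⟩⟩)
  have := le_maxRow hu
  exact List.mem_reverse.mpr (List.mem_range.mpr (by omega))

def Attacks (u v : ℕ × ℕ) : Prop :=
  (u.1 = v.1 ∧ u.2 < v.2) ∨ (u.1 = v.1 + 1 ∧ v.2 < u.2)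

structure ReadingIso (D D' : Diagram) (φ : ℕ × ℕ → ℕ × ℕ) : Prop where
  injOn : Set.InjOn φ (dCells D)
  dCells_eq : dCells D' = (dCells D).image φ
  readingList_eq : readingList D' = (readingList D).map φ
  attacks_iff : ∀ u ∈ dCells D, ∀ v ∈ dCells D, Attacks (φ u) (φ v) ↔ Attacks u v
  eq_below_iff : ∀ u ∈ dCells D, ∀ v ∈ dCells D,
    φ v = ((φ u).1 - 1, (φ u).2) ↔ v = (u.1 - 1, u.2)

namespace ReadingIso

variable {D D' : Diagram} {φ : ℕ × ℕ → ℕ × ℕ}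

lemma dSize_eq (h : ReadingIso D D' φ) : dSize D' = dSize D := by
  rw [dSize, dSize, h.dCells_eq, Finset.card_image_of_injOn h.injOn]

lemma dEntry_apply (h : ReadingIso D D' φ) (w : List ℕ) {u : ℕ × ℕ} (hu : u ∈ dCells D) :
    dEntry D' w (φ u) = dEntry D w u := by
  rw [dEntry, dEntry, h.readingList_eq,
    List.idxOf_map_of_injOn h.injOn (fun _ hx => mem_dCells_of_mem_readingList hx) hu]

lemma invCount_eq (h : ReadingIso D D' φ) (w : List ℕ) : invCount D' w = invCount D w := by
  have hinj : Set.InjOn (Prod.map φ φ) ↑(dCells D ×ˢ dCells D) := by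
    rw [Finset.coe_product]
    exact h.injOn.prodMap h.injOn
  rw [invCount, invCount, h.dCells_eq, ← Finset.prodMap_image_product, Finset.filter_image,
    Finset.card_image_of_injOn (hinj.mono (Finset.filter_subset _ _))]
  congr 1
  refine Finset.filter_congr fun p hp => ?_
  obtain ⟨hu, hv⟩ := Finset.mem_product.mp hp
  simp only [Prod.map_fst, Prod.map_snd, h.dEntry_apply w hu, h.dEntry_apply w hv]
  exact and_congr_right fun _ => h.attacks_iff _ hu _ hv

lemma descentCells_eq (h : ReadingIso D D' φ) (w : List ℕ) :
    descentCells D' w = (descentCells D w).image φ := by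
  rw [descentCells, descentCells, h.dCells_eq, Finset.filter_image]
  congr 1
  refine Finset.filter_congr fun u hu => ?_
  have hbelow : ((φ u).1 - 1, (φ u).2) ∈ (dCells D).image φ ↔ (u.1 - 1, u.2) ∈ dCells D := by
    constructor
    · rintro h'
      obtain ⟨v, hv, hvu⟩ := Finset.mem_image.mp h'
      rwa [(h.eq_below_iff u hu v hv).mp hvu] at hv
    · exact fun hb => Finset.mem_image.mpr ⟨_, hb, (h.eq_below_iff u hu _ hb).mpr rfl⟩
  rw [hbelow]
  refine and_congr_right fun hb => ?_
  rw [← (h.eq_below_iff u hu _ hb).mpr rfl, h.dEntry_apply w hu, h.dEntry_apply w hb]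

lemma statD_eq (h : ReadingIso D D' φ) {f f' : ℕ × ℕ → Fqt}
    (hf : ∀ u ∈ dCells D, f' (φ u) = f u) (w : List ℕ) : statD D' f' w = statD D f w := by
  have hinj : Set.InjOn φ (descentCells D w) := h.injOn.mono (Finset.filter_subset _ _)
  rw [statD, statD, h.invCount_eq, h.descentCells_eq, Finset.prod_image hinj]
  exact congrArg _ (Finset.prod_congr rfl fun u hu => hf u (Finset.filter_subset _ _ hu))

lemma genH_eq (h : ReadingIso D D' φ) {f f' : ℕ × ℕ → Fqt}
    (hf : ∀ u ∈ dCells D, f' (φ u) = f u) : genH D' f' = genH D f := by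
  simp only [genH, h.dSize_eq, h.statD_eq hf]

end ReadingIso

def cycCell (m : ℕ) (u : ℕ × ℕ) : ℕ × ℕ :=
  if u.2 = 1 then (u.1 + 1, m + 1) else (u.1, u.2 - 1)

lemma cycCell_injOn (m : ℕ) : Set.InjOn (cycCell m) {u | u.2 ∈ Finset.Icc 1 (m + 1)} := by
  rintro ⟨a, b⟩ hu ⟨c, d⟩ hv h
  simp only [Set.mem_ofPred_eq, Finset.mem_Icc] at hu hv
  simp only [cycCell] at h
  split_ifs at h <;> simp only [Prod.mk.injEq] at h ⊢ <;> omega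

lemma attacks_cycCell_iff {m : ℕ} {u v : ℕ × ℕ} (hu : u.2 ∈ Finset.Icc 1 (m + 1))
    (hv : v.2 ∈ Finset.Icc 1 (m + 1)) : Attacks (cycCell m u) (cycCell m v) ↔ Attacks u v := by
  obtain ⟨a, b⟩ := u
  obtain ⟨c, d⟩ := v
  simp only [Finset.mem_Icc] at hu hv
  simp only [Attacks, cycCell]
  split_ifs <;> omega

lemma cycCell_eq_below_iff {m : ℕ} {u v : ℕ × ℕ} (hu1 : 1 ≤ u.1)
    (hu : u.2 ∈ Finset.Icc 1 (m + 1)) (hv : v.2 ∈ Finset.Icc 1 (m + 1)) :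
    cycCell m v = ((cycCell m u).1 - 1, (cycCell m u).2) ↔ v = (u.1 - 1, u.2) := by
  obtain ⟨a, b⟩ := u
  obtain ⟨c, d⟩ := v
  simp only [Finset.mem_Icc] at hu1 hu hv
  simp only [cycCell]
  split_ifs <;> simp only [Prod.mk.injEq, and_true] <;> omega

lemma cycFill_cons_cycCell (c : ℕ × ℕ) (T : Diagram) (f : ℕ × ℕ → Fqt) {u : ℕ × ℕ}
    (hu : u.2 ∈ Finset.Icc 1 (T.length + 1)) : cycFill (c :: T) f (cycCell T.length u) = f u := by
  obtain ⟨a, b⟩ := u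
  simp only [Finset.mem_Icc] at hu
  by_cases hb : b = 1
  · simp [cycFill, cycCell, hb]
  · simp only [cycFill, cycCell, hb, if_false, List.length_cons]
    rw [if_neg (by omega), Nat.sub_add_cancel hu.1]

lemma cycD_cons (c : ℕ × ℕ) (T : Diagram) : cycD (c :: T) = T ++ [(c.1 + 1, c.2 + 1)] := rfl

lemma validDiagram_cycD {c : ℕ × ℕ} {T : Diagram} (hD : ValidDiagram (c :: T)) :
    ValidDiagram (cycD (c :: T)) := by
  intro x hx
  rw [cycD_cons] at hx
  rcases List.mem_append.mp hx with hx | hx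
  · exact hD x (List.mem_cons_of_mem c hx)
  · have := hD c List.mem_cons_self
    rw [List.mem_singleton.mp hx]
    omega

lemma map_cycCell_rowCells_cons (c : ℕ × ℕ) (T : Diagram) (i0 : ℕ) :
    (rowCells (c :: T) i0).map (cycCell T.length) =
      (if c.1 ≤ i0 + 1 ∧ i0 + 1 ≤ c.2 then [(i0 + 2, T.length + 1)] else []) ++ rowCells T i0 := by
  rw [rowCells_cons, List.map_append, List.map_map]
  congr 1
  · split_ifs <;> rfl
  · conv_rhs => rw [← List.map_id (rowCells T i0)]
    refine List.map_congr_left fun u hu => ?_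
    have := Finset.mem_Icc.mp (col_mem_Icc_of_mem_dCells (mem_rowCells.mp hu).1)
    simp only [Function.comp_apply, cycCell, id]
    rw [if_neg (by omega), Nat.add_sub_cancel]

lemma readingRows_cycD {c : ℕ × ℕ} (T : Diagram) (hc : 1 ≤ c.1) (R : ℕ) :
    readingRows (cycD (c :: T)) (R + 1) =
      rowCells T R ++ (readingRows (c :: T) R).map (cycCell T.length) := by
  induction R with
  | zero =>
    rw [readingRows_succ, cycD_cons, rowCells_append_singleton, if_neg (by omega)]
    simp [readingRows]
  | succ R ih =>
    rw [readingRows_succ, ih, cycD_cons, rowCells_append_singleton, readingRows_succ,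
      List.map_append, map_cycCell_rowCells_cons]
    simp only [Nat.add_le_add_iff_right, List.append_assoc]

lemma readingList_cycD {c : ℕ × ℕ} (T : Diagram) (hc : 1 ≤ c.1) :
    readingList (cycD (c :: T)) = (readingList (c :: T)).map (cycCell T.length) := by
  set M := max (maxRow (c :: T)) (maxRow (cycD (c :: T)))
  have hT : maxRow T ≤ M := (le_max_right c.2 (maxRow T)).trans (le_max_left _ _)
  rw [← readingRows_eq_readingList (N := M + 1) (by omega),
    ← readingRows_eq_readingList (N := M) (le_max_left _ _), readingRows_cycD T hc,
    rowCells_eq_nil_of_maxRow_le hT, List.nil_append]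

theorem readingIso_cycD {c : ℕ × ℕ} {T : Diagram} (hD : ValidDiagram (c :: T)) :
    ReadingIso (c :: T) (cycD (c :: T)) (cycCell T.length) where
  injOn := (cycCell_injOn _).mono fun _ hu => col_mem_Icc_of_mem_dCells hu
  dCells_eq := by
    rw [dCells_eq_toFinset_readingList (validDiagram_cycD hD),
      readingList_cycD T (hD c List.mem_cons_self).1, dCells_eq_toFinset_readingList hD]
    exact Multiset.toFinset_map (cycCell T.length) (readingList (c :: T) : Multiset (ℕ × ℕ))
  readingList_eq := readingList_cycD T (hD c List.mem_cons_self).1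
  attacks_iff _ hu _ hv := attacks_cycCell_iff (col_mem_Icc_of_mem_dCells hu)
    (col_mem_Icc_of_mem_dCells hv)
  eq_below_iff _ hu _ hv := cycCell_eq_below_iff (one_le_row_of_mem_dCells hD hu)
    (col_mem_Icc_of_mem_dCells hu) (col_mem_Icc_of_mem_dCells hv)

/-- Cycling rule.
If `(D', f') = cycling (D, f)` then `stat_{(D,f)}(w) = stat_{(D',f')}(w)` for every
`w ∈ S_{|D|}`, and consequently `H_{(D,f)}[X;q,t] = H_{(D',f')}[X;q,t]`. -/
theorem cycling_rule (D : Diagram) (hD : ValidDiagram D) (hne : D ≠ [])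
    (f : ℕ × ℕ → Fqt) :
    (∀ w : List ℕ, IsPermList (dSize D) w →
      statD D f w = statD (cycD D) (cycFill D f) w) ∧
    genH D f = genH (cycD D) (cycFill D f) := by
  obtain ⟨c, T, rfl⟩ := List.exists_cons_of_ne_nil hne
  have hiso := readingIso_cycD hD
  have hfill : ∀ u ∈ dCells (c :: T), cycFill (c :: T) f (cycCell T.length u) = f u :=
    fun _ hu => cycFill_cons_cycCell c T f (col_mem_Icc_of_mem_dCells hu)
  exact ⟨fun w _ => (hiso.statD_eq hfill w).symm, (hiso.genH_eq hfill).symm⟩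

end
end

section
/- (1) Let n ≥ 2 and w ∈ S_{2n+1}. If the directed arcs α_1(w) = (w_{2n}, w_{2n+1}) and α_2(w) = (w_{2n−2}, w_{2n−1}) of the matching M(w) cross, then w ∈ 𝔅_{2n+1} if and only if std(w_1⋯w_{2n−1}) ∈ 𝔅_{2n−1}. (2) Let n ≥ 2 and w ∈ S_{2n}. If the directed arcs α_1(w) = (w_{2n}, 2n+1) and α_2(w) = (w_{2n−2}, w_{2n−1}) cross, then w ∈ 𝔅_{2n} if and only if std(w_1⋯w_{2n−1}) ∈ 𝔅_{2n−1}. -/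
open scoped BigOperators Classical

noncomputable section

/-! The arcs `α_2(w), α_3(w), …` of `w` are the arcs `α_1(u), α_2(u), …` of its prefix
`u = w_1 ⋯ w_{2n-1}` (of odd length, so no arc of `u` ends at the unlabelled vertex
`|u| + 1`), and `std u` is `u` relabelled by the order-preserving map `x ↦ #{i : u_i ≤ x}`,
which fixes `0`. Crossing, nesting and direction of arcs only see the relative order of
endpoints, so `u` and `std u` pass the Butler test together. Since `α_1(w)` and `α_2(w)`
cross, the first non-crossing pair of consecutive arcs of `w` is that of `u` shifted by one,
and the test reads the same arcs. -/

theorem IsPermList.length_eq {N : ℕ} {w : List ℕ} (h : IsPermList N w) : w.length = N := by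
  simpa using List.Perm.length_eq h

theorem IsPermList.nodup {N : ℕ} {w : List ℕ} (h : IsPermList N w) : w.Nodup :=
  (List.Perm.nodup_iff h).mpr List.nodup_range'

theorem IsPermList.pos_of_mem {N : ℕ} {w : List ℕ} (h : IsPermList N w) {x : ℕ} (hx : x ∈ w) :
    0 < x := by
  have := List.mem_range'_1.mp ((List.Perm.mem_iff h).mp hx)
  omega

namespace Butler

section Relabelling

variable {g : ℕ → ℕ} {S : Set ℕ} {A B : ℕ × ℕ}

lemma forwardArc_map (hg : StrictMonoOn g S) (hA₁ : A.1 ∈ S) (hA₂ : A.2 ∈ S) :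
    forwardArc (Prod.map g g A) = forwardArc A := by
  simp only [forwardArc, Prod.map_fst, Prod.map_snd, hg.lt_iff_lt hA₁ hA₂]

lemma reverseArc_map (hg : StrictMonoOn g S) (hA₁ : A.1 ∈ S) (hA₂ : A.2 ∈ S) :
    reverseArc (Prod.map g g A) = reverseArc A := by
  simp only [reverseArc, Prod.map_fst, Prod.map_snd, hg.lt_iff_lt hA₂ hA₁]

lemma crossArc_map (hg : StrictMonoOn g S) (hA₁ : A.1 ∈ S) (hA₂ : A.2 ∈ S) (hB₁ : B.1 ∈ S)
    (hB₂ : B.2 ∈ S) : crossArc (Prod.map g g A) (Prod.map g g B) = crossArc A B := by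
  have hA : min A.1 A.2 ∈ S := min_rec' _ hA₁ hA₂
  have hA' : max A.1 A.2 ∈ S := max_rec' _ hA₁ hA₂
  have hB : min B.1 B.2 ∈ S := min_rec' _ hB₁ hB₂
  have hB' : max B.1 B.2 ∈ S := max_rec' _ hB₁ hB₂
  simp only [crossArc, Prod.map_fst, Prod.map_snd, ← hg.monotoneOn.map_min hA₁ hA₂,
    ← hg.monotoneOn.map_max hA₁ hA₂, ← hg.monotoneOn.map_min hB₁ hB₂,
    ← hg.monotoneOn.map_max hB₁ hB₂, hg.lt_iff_lt, hA, hA', hB, hB']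

lemma nestedArc_map (hg : StrictMonoOn g S) (hA₁ : A.1 ∈ S) (hA₂ : A.2 ∈ S) (hB₁ : B.1 ∈ S)
    (hB₂ : B.2 ∈ S) : nestedArc (Prod.map g g A) (Prod.map g g B) = nestedArc A B := by
  have hA : min A.1 A.2 ∈ S := min_rec' _ hA₁ hA₂
  have hA' : max A.1 A.2 ∈ S := max_rec' _ hA₁ hA₂
  have hB : min B.1 B.2 ∈ S := min_rec' _ hB₁ hB₂
  have hB' : max B.1 B.2 ∈ S := max_rec' _ hB₁ hB₂
  simp only [nestedArc, Prod.map_fst, Prod.map_snd, ← hg.monotoneOn.map_min hA₁ hA₂,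
    ← hg.monotoneOn.map_max hA₁ hA₂, ← hg.monotoneOn.map_min hB₁ hB₂,
    ← hg.monotoneOn.map_max hB₁ hB₂, hg.lt_iff_lt, hA, hA', hB, hB']

end Relabelling

section ArcSequences

def noncrossIdx (K : ℕ) (α : ℕ → ℕ × ℕ) : Finset ℕ :=
  (Finset.Icc 1 (K - 1)).filter fun k => crossArc (α k) (α (k + 1)) = false

def butlerVerdict (A B : ℕ × ℕ) : Bool :=
  (nestedArc B A && reverseArc A) || (!nestedArc B A && forwardArc A)

def butlerOfArcs (K : ℕ) (α : ℕ → ℕ × ℕ) : Bool :=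
  if h : (noncrossIdx K α).Nonempty then
    butlerVerdict (α ((noncrossIdx K α).min' h)) (α ((noncrossIdx K α).min' h + 1))
  else reverseArc (α (K - 1))

lemma isButlerB_eq_butlerOfArcs (w : List ℕ) :
    isButlerB w = butlerOfArcs (numArcs w.length) (arcW w) := rfl

variable {K : ℕ} {α β : ℕ → ℕ × ℕ}

lemma butlerOfArcs_map {g : ℕ → ℕ} {S : Set ℕ} (hg : StrictMonoOn g S)
    (hα : ∀ k, (α k).1 ∈ S ∧ (α k).2 ∈ S) :
    butlerOfArcs K (fun k => Prod.map g g (α k)) = butlerOfArcs K α := by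
  have hidx : noncrossIdx K (fun k => Prod.map g g (α k)) = noncrossIdx K α :=
    Finset.filter_congr fun k _ => by
      rw [crossArc_map hg (hα k).1 (hα k).2 (hα (k + 1)).1 (hα (k + 1)).2]
  unfold butlerOfArcs
  rw [hidx]
  split_ifs
  · simp only [butlerVerdict, nestedArc_map hg, forwardArc_map hg, reverseArc_map hg, hα]
  · exact reverseArc_map hg (hα _).1 (hα _).2

lemma noncrossIdx_succ (hcross : crossArc (α 1) (α 2) = true) :
    noncrossIdx (K + 1) α = (noncrossIdx K fun k => α (k + 1)).image (· + 1) := by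
  ext k
  simp only [noncrossIdx, Finset.mem_filter, Finset.mem_Icc, Finset.mem_image]
  constructor
  · rintro ⟨⟨hk1, hkK⟩, hk⟩
    obtain ⟨j, rfl⟩ : ∃ j, k = j + 1 := ⟨k - 1, by omega⟩
    rcases Nat.eq_zero_or_pos j with rfl | hj
    · simp [hcross] at hk
    · exact ⟨j, ⟨⟨hj, by omega⟩, hk⟩, rfl⟩
  · rintro ⟨j, ⟨⟨hj1, hjK⟩, hj⟩, rfl⟩
    exact ⟨⟨by omega, by omega⟩, hj⟩

lemma butlerOfArcs_succ_of_crossArc (hK : 1 ≤ K) (hcross : crossArc (α 1) (α 2) = true) :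
    butlerOfArcs (K + 1) α = butlerOfArcs K fun k => α (k + 1) := by
  unfold butlerOfArcs
  rw [noncrossIdx_succ hcross]
  split_ifs with h₁ h₂ h₂
  · rw [Finset.min'_image (fun _ _ h => Nat.add_le_add_right h 1)]
  · exact absurd h₁.of_image h₂
  · exact absurd (h₂.image _) h₁
  · congr 2
    omega

lemma butlerOfArcs_congr (hK : 2 ≤ K) (h : ∀ k, 1 ≤ k → α k = β k) :
    butlerOfArcs K α = butlerOfArcs K β := by
  have hidx : noncrossIdx K α = noncrossIdx K β :=
    Finset.filter_congr fun k hk => by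
      rw [Finset.mem_Icc] at hk
      rw [h k hk.1, h (k + 1) (by omega)]
  unfold butlerOfArcs
  rw [hidx]
  split_ifs with hne
  · have hmin := (Finset.mem_Icc.mp (Finset.mem_filter.mp ((noncrossIdx K β).min'_mem hne)).1).1
    rw [h _ hmin, h _ (by omega)]
  · rw [h _ (by omega)]

end ArcSequences

section Words

lemma nthW_eq_zero_or_mem (u : List ℕ) (p : ℕ) : nthW u p = 0 ∨ nthW u p ∈ u := by
  rw [nthW, List.getD_eq_getElem?_getD]
  cases h : u[p - 1]? with
  | none => exact Or.inl rfl
  | some x => exact Or.inr (List.mem_of_getElem? h)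

lemma nthW_take {w : List ℕ} {m p : ℕ} (hp : p - 1 < m) : nthW (w.take m) p = nthW w p := by
  simp only [nthW, List.getD_eq_getElem?_getD, List.getElem?_take_of_lt hp]

lemma nthW_map {g : ℕ → ℕ} (hg0 : g 0 = 0) (u : List ℕ) (p : ℕ) :
    nthW (u.map g) p = g (nthW u p) := by
  simpa only [nthW, hg0] using List.getD_map (l := u) (n := p - 1) (d := 0) g

variable {u : List ℕ}

lemma arcW_mem_of_odd (hu : Odd u.length) (k : ℕ) :
    (arcW u k).1 ∈ {x | x = 0 ∨ x ∈ u} ∧ (arcW u k).2 ∈ {x | x = 0 ∨ x ∈ u} := by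
  have hodd : u.length % 2 = 1 := Nat.odd_iff.mp hu
  simp only [arcW, hodd, one_ne_zero, if_false]
  split_ifs
  · exact ⟨nthW_eq_zero_or_mem .., nthW_eq_zero_or_mem ..⟩
  · exact ⟨Or.inl rfl, nthW_eq_zero_or_mem ..⟩

lemma arcW_map_of_odd {g : ℕ → ℕ} (hg0 : g 0 = 0) (hu : Odd u.length) (k : ℕ) :
    arcW (u.map g) k = Prod.map g g (arcW u k) := by
  have hodd : u.length % 2 = 1 := Nat.odd_iff.mp hu
  simp only [arcW, List.length_map, hodd, one_ne_zero, if_false, nthW_map hg0]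
  split_ifs <;> simp [hg0]

lemma isButlerB_map_of_odd {g : ℕ → ℕ} (hu : Odd u.length) (hg0 : g 0 = 0)
    (hg : StrictMonoOn g {x | x = 0 ∨ x ∈ u}) : isButlerB (u.map g) = isButlerB u := by
  have harcs : arcW (u.map g) = fun k => Prod.map g g (arcW u k) :=
    funext (arcW_map_of_odd hg0 hu)
  rw [isButlerB_eq_butlerOfArcs, isButlerB_eq_butlerOfArcs, List.length_map, harcs]
  exact butlerOfArcs_map hg (arcW_mem_of_odd hu)

lemma countP_eq_countP_range (q : ℕ → Bool) (u : List ℕ) :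
    u.countP q = (List.range u.length).countP fun t => q (u.getD t 0) := by
  induction u with
  | nil => rfl
  | cons a u ih =>
    simp only [List.range_succ_eq_map, List.countP_cons, List.countP_map, ih, List.length_cons,
      List.getD_cons_zero]
    rfl

lemma std_eq_map_countP (hu : u.Nodup) : std u = u.map fun x => u.countP (· ≤ x) := by
  apply List.ext_getElem (by simp [std])
  intro s hs hs'
  simp only [std, List.getElem_map, List.getElem_range, ← List.countP_eq_length_filter]
  rw [countP_eq_countP_range _ u]
  refine List.countP_congr fun t ht => ?_
  rw [List.mem_range] at ht
  have hs₀ : s < u.length := by simpa [std] using hs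
  simp only [List.getD_eq_getElem _ _ hs₀, List.getD_eq_getElem _ _ ht, decide_eq_true_eq]
  refine ⟨fun h => h.elim le_of_lt fun h => h.1.le, fun h => ?_⟩
  rcases h.lt_or_eq with h | h
  · exact Or.inl h
  · exact Or.inr ⟨h, (hu.getElem_inj_iff.mp h).le⟩

lemma strictMonoOn_countP_le : StrictMonoOn (fun x => u.countP (· ≤ x)) {x | x = 0 ∨ x ∈ u} := by
  rintro a - b (rfl | hb) hab
  · omega
  have hsub : (u.filter (· ≤ a)).Sublist (u.filter (· ≤ b)) :=
    List.monotone_filter_right u fun x (hx : decide (x ≤ a) = true) => decide_eq_true ((of_decide_eq_true hx).trans hab.le)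
  have hb' : b ∉ u.filter (· ≤ a) := by
    simp only [List.mem_filter, decide_eq_true_eq]
    omega
  have hne : u.filter (· ≤ a) ≠ u.filter (· ≤ b) := fun h =>
    hb' (h ▸ List.mem_filter.mpr ⟨hb, decide_eq_true le_rfl⟩)
  simp only [List.countP_eq_length_filter]
  exact lt_of_le_of_ne hsub.length_le fun h => hne (hsub.eq_of_length h)

lemma isButlerB_std (hu : u.Nodup) (hpos : ∀ x ∈ u, 0 < x) (hodd : Odd u.length) :
    isButlerB (std u) = isButlerB u := by
  rw [std_eq_map_countP hu]
  refine isButlerB_map_of_odd hodd ?_ strictMonoOn_countP_le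
  exact List.countP_eq_zero.mpr fun x hx => by simpa using (hpos x hx).ne'

end Words

section Truncation

variable {n : ℕ} {w : List ℕ}

lemma arcW_take (hn : 2 ≤ n) (hw : w.length = 2 * n + 1 ∨ w.length = 2 * n) {k : ℕ} (hk : 1 ≤ k) :
    arcW (w.take (2 * n - 1)) k = arcW w (k + 1) := by
  have hlen : (w.take (2 * n - 1)).length = 2 * n - 1 := by rw [List.length_take]; omega
  have hodd : (2 * n - 1) % 2 = 1 := by omega
  have hhalf : (2 * n - 1 - 1) / 2 = n - 1 := by omega
  simp only [arcW, hlen, hodd, hhalf, one_ne_zero, if_false]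
  rcases hw with hw | hw
  · have hodd' : (2 * n + 1) % 2 = 1 := by omega
    have hhalf' : (2 * n + 1 - 1) / 2 = n := by omega
    simp only [hw, hodd', hhalf', one_ne_zero, if_false]
    split_ifs <;> try omega
    · rw [nthW_take (by omega), nthW_take (by omega)]
      congr 2 <;> omega
    · rw [nthW_take (by omega)]
  · have heven : (2 * n) % 2 = 0 := by omega
    have hhalf' : 2 * n / 2 = n := by omega
    have hk0 : k ≠ 0 := by omega
    simp only [hw, heven, hhalf', if_true, Nat.add_eq_right, hk0, if_false]
    split_ifs <;> try omega
    · rw [nthW_take (by omega), nthW_take (by omega)]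
      congr 2 <;> omega
    · rw [nthW_take (by omega)]

lemma isButlerB_take_of_crossArc (hn : 2 ≤ n) (hw : w.length = 2 * n + 1 ∨ w.length = 2 * n)
    (hcross : crossArc (arcW w 1) (arcW w 2) = true) :
    isButlerB w = isButlerB (w.take (2 * n - 1)) := by
  have hK : numArcs w.length = n + 1 := by
    rcases hw with hw | hw <;> simp only [numArcs, hw] <;> split_ifs <;> omega
  have hK' : numArcs (w.take (2 * n - 1)).length = n := by
    have : (w.take (2 * n - 1)).length = 2 * n - 1 := by rw [List.length_take]; omega
    simp only [numArcs, this]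
    split_ifs <;> omega
  rw [isButlerB_eq_butlerOfArcs, isButlerB_eq_butlerOfArcs, hK, hK',
    butlerOfArcs_succ_of_crossArc (by omega) hcross]
  exact butlerOfArcs_congr hn fun k hk => (arcW_take hn hw hk).symm

end Truncation

lemma isButlerB_std_take_of_crossArc {n : ℕ} {w : List ℕ} (hn : 2 ≤ n)
    (hw : w.length = 2 * n + 1 ∨ w.length = 2 * n) (hnd : w.Nodup) (hpos : ∀ x ∈ w, 0 < x)
    (hcross : crossArc (arcW w 1) (arcW w 2) = true) :
    isButlerB (std (w.take (2 * n - 1))) = isButlerB w := by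
  have hodd : Odd (w.take (2 * n - 1)).length := by
    rw [List.length_take, Nat.odd_iff]
    omega
  rw [isButlerB_std (hnd.sublist (List.take_sublist _ _))
      (fun x hx => hpos x (List.mem_of_mem_take hx)) hodd,
    isButlerB_take_of_crossArc hn hw hcross]

end Butler

/-- Butler recursion, Lemma on crossing arcs.
(1) For `w ∈ S_{2n+1}`, if `α_1(w)` and `α_2(w)` cross, then `w ∈ 𝔅_{2n+1}` iff
`std(w_1⋯w_{2n-1}) ∈ 𝔅_{2n-1}`.
(2) For `w ∈ S_{2n}`, if `α_1(w)` and `α_2(w)` cross, then `w ∈ 𝔅_{2n}` iff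
`std(w_1⋯w_{2n-1}) ∈ 𝔅_{2n-1}`. -/
theorem butler_recursion :
    (∀ n : ℕ, 2 ≤ n → ∀ w : List ℕ, IsPermList (2 * n + 1) w →
      crossArc (arcW w 1) (arcW w 2) = true →
      (isButlerB w = true ↔ isButlerB (std (w.take (2 * n - 1))) = true)) ∧
    (∀ n : ℕ, 2 ≤ n → ∀ w : List ℕ, IsPermList (2 * n) w →
      crossArc (arcW w 1) (arcW w 2) = true →
      (isButlerB w = true ↔ isButlerB (std (w.take (2 * n - 1))) = true)) := by
  constructor
  · intro n hn w hw hcross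
    rw [Butler.isButlerB_std_take_of_crossArc hn (Or.inl hw.length_eq) hw.nodup
      (fun _ => hw.pos_of_mem) hcross]
  · intro n hn w hw hcross
    rw [Butler.isButlerB_std_take_of_crossArc hn (Or.inr hw.length_eq) hw.nodup
      (fun _ => hw.pos_of_mem) hcross]

end
end

section
/- Let V = R_{[1,2]}({2}) be the vertical two-cell ribbon with contents 1, 2, let H = R_{[1,2]}(∅) be the horizontal two-cell ribbon with contents 1, 2, and let C_1, C_2 be single cells of contents 1 and 2. Then LLT_{(C_1,C_2)}[X;q] ≡ q·LLT_{(V)}[X;q] + LLT_{(H)}[X;q] as an LLT equivalence; that is, for every tuple λ of skew partitions, LLT_{((C_1,C_2),λ)}[X;q] = q·LLT_{((V),λ)}[X;q] + LLT_{((H),λ)}[X;q]. -/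
open scoped BigOperators Classical

noncomputable section

/-!
Let `s` be one of the dominoes `V`, `H`. Matching `C₁, C₂` with the cells of `s` of contents
`1, 2`, and each cell of `λ` with itself, preserves contents and reading order, so a permutation
`w` fills matched cells with the same entries in `((C₁,C₂),λ)` and in `((s),λ)`. The tableau
conditions then agree except that `V` demands `T(C₁) < T(C₂)` and `H` demands `T(C₂) < T(C₁)`:
exactly one of them holds. Inversions agree except for the pair `(C₂, C₁)`, an inversion of
`((C₁,C₂),λ)` exactly when `T(C₁) < T(C₂)`, i.e. in the `V` case; this is the factor `q`.
-/

namespace LLT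

open List

abbrev Cell : Type := ℕ × ℕ × ℕ

def shiftCell (m : ℕ) (u : Cell) : Cell := (m + u.1, u.2)

lemma shiftCell_shiftCell (m n : ℕ) (u : Cell) :
    shiftCell m (shiftCell n u) = shiftCell (m + n) u := by
  simp only [shiftCell, Nat.add_assoc]

lemma tCells_append (P Q : List SkewShape) :
    tCells (P ++ Q) = tCells P ++ (tCells Q).map (shiftCell P.length) := by
  unfold tCells
  rw [length_append, range_add, flatMap_append, flatMap_map, map_flatMap]
  congr 1
  · refine flatMap_congr fun k hk => ?_
    rw [getD_append _ _ _ _ (mem_range.1 hk)]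
  · refine flatMap_congr fun k _ => ?_
    rw [getD_append_right _ _ _ _ (Nat.le_add_right _ _), Nat.add_sub_cancel_left, map_map]
    rfl

lemma fst_lt_of_mem_tCells {ν : List SkewShape} {u : Cell} (hu : u ∈ tCells ν) :
    u.1 < ν.length := by
  obtain ⟨k, hk, c, -, rfl⟩ : ∃ k ∈ range ν.length, ∃ c ∈ skCells (ν.getD k ([], [])),
      (k, c.1, c.2) = u := by simpa [tCells] using hu
  exact mem_range.1 hk

lemma mem_tCells_append_shiftCell {P Q : List SkewShape} {u : Cell} :
    shiftCell P.length u ∈ tCells (P ++ Q) ↔ u ∈ tCells Q := by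
  rw [tCells_append, mem_append, mem_map]
  refine ⟨fun h => ?_, fun h => Or.inr ⟨u, h, rfl⟩⟩
  rcases h with h | ⟨v, hv, he⟩
  · have := fst_lt_of_mem_tCells h
    simp [shiftCell] at this
  · obtain rfl : v = u := by
      simpa [shiftCell, Prod.ext_iff] using he
    exact hv

lemma mem_tCells_append_of_fst_lt {P Q : List SkewShape} {u : Cell} (hu : u.1 < P.length) :
    u ∈ tCells (P ++ Q) ↔ u ∈ tCells P := by
  rw [tCells_append, mem_append, mem_map]
  refine ⟨fun h => h.resolve_right ?_, Or.inl⟩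
  rintro ⟨v, -, rfl⟩
  simp [shiftCell] at hu

lemma skCells_nodup (s : SkewShape) : (skCells s).Nodup := by
  refine nodup_flatMap.2 ⟨fun _ _ => (nodup_range' ..).map fun a b h => congrArg Prod.snd h, ?_⟩
  refine pairwise_lt_range.imp fun hab => ?_
  simp only [Function.onFun, disjoint_left, mem_map]
  rintro _ ⟨_, _, rfl⟩ ⟨_, _, h⟩
  exact hab.ne' (Nat.succ_injective (congrArg Prod.fst h))

lemma tCells_nodup (ν : List SkewShape) : (tCells ν).Nodup := by
  refine nodup_flatMap.2 ⟨fun _ _ => (skCells_nodup _).map fun a b h => ?_, ?_⟩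
  · simpa [Prod.ext_iff] using h
  refine pairwise_lt_range.imp fun hab => ?_
  simp only [Function.onFun, disjoint_left, mem_map]
  rintro _ ⟨_, _, rfl⟩ ⟨_, _, h⟩
  exact hab.ne' (congrArg Prod.fst h)

lemma lltLe_iff (u v : Cell) : lltLe u v = true ↔
    contentOf u < contentOf v ∨
      (contentOf u = contentOf v ∧ (u.1 < v.1 ∨ (u.1 = v.1 ∧ u.2.2 ≤ v.2.2))) := by
  simp [lltLe]

lemma lltReading_perm (ν : List SkewShape) : lltReading ν ~ tCells ν :=
  mergeSort_perm _ _

lemma lltReading_nodup (ν : List SkewShape) : (lltReading ν).Nodup :=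
  (lltReading_perm ν).nodup_iff.2 (tCells_nodup ν)

lemma lltReading_pairwise (ν : List SkewShape) :
    (lltReading ν).Pairwise fun u v => lltLe u v = true :=
  pairwise_mergeSort (fun _ _ _ h₁ h₂ => by simp only [lltLe_iff, contentOf] at *; omega)
    (fun u v => by simp only [Bool.or_eq_true, lltLe_iff, contentOf]; omega) _

lemma lltReading_eq_map {ν ν' : List SkewShape} {φ : Cell → Cell}
    (hperm : (tCells ν).map φ ~ tCells ν')
    (hmono : ∀ u ∈ tCells ν, ∀ v ∈ tCells ν, lltLe u v = true → lltLe (φ u) (φ v) = true) :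
    lltReading ν' = (lltReading ν).map φ := by
  have : Std.Antisymm fun u v : Cell => lltLe u v = true := ⟨fun ⟨_, _, _⟩ ⟨_, _, _⟩ h₁ h₂ => by
    simp only [lltLe_iff, contentOf, Prod.mk.injEq] at h₁ h₂ ⊢; omega⟩
  refine Perm.eq_of_pairwise' (lltReading_pairwise ν') ?_
    ((lltReading_perm ν').trans (hperm.symm.trans ((lltReading_perm ν).map φ).symm))
  refine pairwise_map.2 ((lltReading_pairwise ν).imp_of_mem fun hu hv huv => ?_)
  exact hmono _ ((lltReading_perm ν).subset hu) _ ((lltReading_perm ν).subset hv) huv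

lemma lltEntry_map {ν ν' : List SkewShape} {φ : Cell → Cell}
    (hread : lltReading ν' = (lltReading ν).map φ) (w : List ℕ) {u : Cell}
    (hu : u ∈ tCells ν) : lltEntry ν' w (φ u) = lltEntry ν w u := by
  have hu' := (lltReading_perm ν).mem_iff.2 hu
  have hi := idxOf_lt_length_of_mem hu'
  have hφ : ((lltReading ν).map φ)[(lltReading ν).idxOf u]'(by simpa using hi) = φ u := by
    simp [getElem_idxOf]
  unfold lltEntry
  rw [hread, ← hφ, Nodup.idxOf_getElem (hread ▸ lltReading_nodup ν')]

lemma lltEntry_injOn {ν : List SkewShape} {w : List ℕ} (hw : w ∈ PermWords (lltSize ν)) :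
    Set.InjOn (lltEntry ν w) {u | u ∈ tCells ν} := by
  intro u hu v hv h
  have hwp : w ~ range' 1 (lltSize ν) := mem_permutations.1 hw
  have hlen : (lltReading ν).length = w.length := by
    rw [(lltReading_perm ν).length_eq, hwp.length_eq, length_range', lltSize]
  have hu' := (lltReading_perm ν).mem_iff.2 hu
  have hv' := (lltReading_perm ν).mem_iff.2 hv
  have hiu := hlen ▸ idxOf_lt_length_of_mem hu'
  have hiv := hlen ▸ idxOf_lt_length_of_mem hv'
  unfold lltEntry at h
  rw [getD_eq_getElem _ _ hiu, getD_eq_getElem _ _ hiv,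
    (hwp.nodup_iff.2 nodup_range').getElem_inj_iff] at h
  exact (idxOf_inj hu').1 h

def IsStandardFilling (ν : List SkewShape) (e : Cell → ℕ) : Prop :=
  ∀ u ∈ tCells ν,
    ((u.1, u.2.1, u.2.2 + 1) ∈ tCells ν → e u < e (u.1, u.2.1, u.2.2 + 1)) ∧
    ((u.1, u.2.1 + 1, u.2.2) ∈ tCells ν → e u < e (u.1, u.2.1 + 1, u.2.2))

lemma lltStandard_iff_isStandardFilling (ν : List SkewShape) (w : List ℕ) :
    lltStandard ν w ↔ IsStandardFilling ν (lltEntry ν w) := Iff.rfl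

lemma isStandardFilling_congr {ν : List SkewShape} {e e' : Cell → ℕ}
    (h : ∀ u ∈ tCells ν, e u = e' u) : IsStandardFilling ν e ↔ IsStandardFilling ν e' := by
  refine forall₂_congr fun u hu => and_congr (imp_congr_right fun hr => ?_)
    (imp_congr_right fun hr => ?_) <;> rw [h _ hu, h _ hr]

lemma isStandardFilling_append (P Q : List SkewShape) (e : Cell → ℕ) :
    IsStandardFilling (P ++ Q) e ↔
      IsStandardFilling P e ∧ IsStandardFilling Q (e ∘ shiftCell P.length) := by
  unfold IsStandardFilling
  rw [tCells_append, forall_mem_append, forall_mem_map, ← tCells_append]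
  refine and_congr (forall₂_congr fun u hu => ?_) (forall₂_congr fun t _ => ?_)
  · have hlt := fst_lt_of_mem_tCells hu
    rw [mem_tCells_append_of_fst_lt (u := (u.1, u.2.1, u.2.2 + 1)) hlt,
      mem_tCells_append_of_fst_lt (u := (u.1, u.2.1 + 1, u.2.2)) hlt]
  · exact and_congr (imp_congr_left (mem_tCells_append_shiftCell (u := (_, _, _ + 1))))
      (imp_congr_left (mem_tCells_append_shiftCell (u := (_, _ + 1, _))))

def InvPair (u v : Cell) : Prop :=
  (u.1 < v.1 ∧ contentOf u = contentOf v) ∨ (v.1 < u.1 ∧ contentOf u = contentOf v + 1)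

instance : DecidableRel InvPair := fun _ _ => by unfold InvPair; infer_instance

lemma lltInv_eq_countP_invPair (ν : List SkewShape) (w : List ℕ) :
    lltInv ν w = ((tCells ν).product (tCells ν)).countP fun p =>
      decide (lltEntry ν w p.2 < lltEntry ν w p.1 ∧ InvPair p.1 p.2) :=
  rfl

lemma countP_eq_countP_add_of_eq_of_ne {α : Type*} [BEq α] [LawfulBEq α] {p q : α → Bool} {a : α}
    {l : List α} (hq : q a = false) (h : ∀ b ∈ l, b ≠ a → p b = q b) :
    l.countP p = l.countP q + if p a then l.count a else 0 := by
  induction l with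
  | nil => simp
  | cons b l ih =>
    rw [countP_cons, countP_cons, count_cons, ih fun c hc => h c (mem_cons_of_mem b hc)]
    by_cases hb : b = a
    · subst hb
      cases p b <;> simp [hq, Nat.add_assoc]
    · rw [h b mem_cons_self hb]
      simp only [beq_iff_eq, hb, if_false]
      split <;> omega

lemma product_map {α β : Type*} (f : α → β) (l₁ l₂ : List α) :
    (l₁.map f).product (l₂.map f) = (l₁.product l₂).map (Prod.map f f) := by
  simp only [List.product, flatMap_map, map_flatMap, map_map]
  rfl

/-- Cells of a tuple are `(component, row, column)`; `cellC a` is the cell in row `a + 1` of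
column `1`, so these are `C₁` and `C₂` in the tuple `(C₁, C₂, …)`. -/
def cellOne : Cell := (0, 2, 1)

def cellTwo : Cell := (1, 3, 1)

lemma tCells_cellC_pair : tCells [cellC 1, cellC 2] = [cellOne, cellTwo] := by decide

lemma lltStandard_cellC_pair_iff (lam : List SkewShape) (w : List ℕ) :
    lltStandard ([cellC 1, cellC 2] ++ lam) w ↔
      IsStandardFilling lam (lltEntry ([cellC 1, cellC 2] ++ lam) w ∘ shiftCell 2) := by
  rw [lltStandard_iff_isStandardFilling, isStandardFilling_append]
  exact and_iff_right (by simp [IsStandardFilling, tCells_cellC_pair, cellOne, cellTwo])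

def IsDomino (s : SkewShape) (x y : Cell) : Prop :=
  tCells [s] ~ [x, y] ∧ contentOf x = 1 ∧ contentOf y = 2

/-- Matches the cells of `(s, λ)` with those of `(C₁, C₂, λ)`; for a domino this preserves
contents and reading order. -/
def relabel (x y : Cell) (u : Cell) : Cell :=
  if u = x then cellOne else if u = y then cellTwo else shiftCell 1 u

lemma relabel_left (x y : Cell) : relabel x y x = cellOne := if_pos rfl

namespace IsDomino

variable {s : SkewShape} {x y : Cell}

lemma fst_eq_zero (h : IsDomino s x y) : x.1 = 0 ∧ y.1 = 0 := by
  have hx := fst_lt_of_mem_tCells (h.1.mem_iff.2 (mem_cons_self ..))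
  have hy := fst_lt_of_mem_tCells (h.1.mem_iff.2 (mem_cons_of_mem _ (mem_cons_self ..)))
  simp only [length_singleton, Nat.lt_one_iff] at hx hy
  exact ⟨hx, hy⟩

lemma ne (h : IsDomino s x y) : x ≠ y := fun hxy => by
  have := h.2.1.symm.trans (hxy ▸ h.2.2)
  norm_num at this

lemma relabel_snd (h : IsDomino s x y) : relabel x y y = cellTwo := by
  rw [relabel, if_neg h.ne.symm, if_pos rfl]

lemma relabel_shiftCell (h : IsDomino s x y) (t : Cell) :
    relabel x y (shiftCell 1 t) = shiftCell 2 t := by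
  have hne : ∀ z : Cell, z.1 = 0 → shiftCell 1 t ≠ z := fun z hz he => by
    simp [← he, shiftCell] at hz
  rw [relabel, if_neg (hne x h.fst_eq_zero.1), if_neg (hne y h.fst_eq_zero.2),
    shiftCell_shiftCell]

lemma tCells_append_perm (h : IsDomino s x y) (lam : List SkewShape) :
    tCells ([s] ++ lam) ~ x :: y :: (tCells lam).map (shiftCell 1) := by
  rw [tCells_append]
  exact h.1.append_right _

lemma mem_tCells_append (h : IsDomino s x y) {lam : List SkewShape} {u : Cell} :
    u ∈ tCells ([s] ++ lam) ↔ u = x ∨ u = y ∨ ∃ t ∈ tCells lam, shiftCell 1 t = u := by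
  rw [(h.tCells_append_perm lam).mem_iff]
  simp only [mem_cons, mem_map]

lemma map_relabel_perm (h : IsDomino s x y) (lam : List SkewShape) :
    (tCells ([s] ++ lam)).map (relabel x y) ~ tCells ([cellC 1, cellC 2] ++ lam) := by
  refine ((h.tCells_append_perm lam).map _).trans ?_
  rw [tCells_append, tCells_cellC_pair, map_cons, map_cons, relabel_left x y, h.relabel_snd,
    map_map]
  exact .cons _ (.cons _ (.of_eq (map_congr_left fun t _ => h.relabel_shiftCell t)))

lemma relabel_monotone (h : IsDomino s x y) (lam : List SkewShape) :
    ∀ u ∈ tCells ([s] ++ lam), ∀ v ∈ tCells ([s] ++ lam),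
      lltLe u v = true → lltLe (relabel x y u) (relabel x y v) = true := by
  obtain ⟨hx0, hy0⟩ := h.fst_eq_zero
  have hx := h.2.1
  have hy := h.2.2
  intro u hu v hv huv
  rcases h.mem_tCells_append.1 hu with hu | hu | ⟨t, -, hu⟩ <;>
  rcases h.mem_tCells_append.1 hv with hv | hv | ⟨t', -, hv⟩ <;> subst u v <;>
  simp only [relabel_left x y, h.relabel_snd, h.relabel_shiftCell] <;>
  simp only [lltLe_iff, contentOf, cellOne, cellTwo, shiftCell, true_and] at huv hx hy ⊢ <;> omega

lemma lltEntry_relabel (h : IsDomino s x y) (lam : List SkewShape) (w : List ℕ) {u : Cell}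
    (hu : u ∈ tCells ([s] ++ lam)) :
    lltEntry ([cellC 1, cellC 2] ++ lam) w (relabel x y u) = lltEntry ([s] ++ lam) w u :=
  lltEntry_map (lltReading_eq_map (h.map_relabel_perm lam) (h.relabel_monotone lam)) w hu

lemma lltEntry_fst (h : IsDomino s x y) (lam : List SkewShape) (w : List ℕ) :
    lltEntry ([s] ++ lam) w x = lltEntry ([cellC 1, cellC 2] ++ lam) w cellOne := by
  rw [← h.lltEntry_relabel lam w (h.mem_tCells_append.2 (.inl rfl)), relabel_left x y]

lemma lltEntry_snd (h : IsDomino s x y) (lam : List SkewShape) (w : List ℕ) :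
    lltEntry ([s] ++ lam) w y = lltEntry ([cellC 1, cellC 2] ++ lam) w cellTwo := by
  rw [← h.lltEntry_relabel lam w (h.mem_tCells_append.2 (.inr (.inl rfl))), h.relabel_snd]

lemma invPair_relabel (h : IsDomino s x y) {lam : List SkewShape} {u v : Cell}
    (hu : u ∈ tCells ([s] ++ lam)) (hv : v ∈ tCells ([s] ++ lam)) :
    InvPair (relabel x y u) (relabel x y v) ↔ InvPair u v ∨ (u = y ∧ v = x) := by
  obtain ⟨hx0, hy0⟩ := h.fst_eq_zero
  have hx := h.2.1
  have hy := h.2.2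
  rcases h.mem_tCells_append.1 hu with hu | hu | ⟨t, -, hu⟩ <;>
  rcases h.mem_tCells_append.1 hv with hv | hv | ⟨t', -, hv⟩ <;> subst u v <;>
  simp only [relabel_left x y, h.relabel_snd, h.relabel_shiftCell] <;>
  simp only [InvPair, contentOf, cellOne, cellTwo, shiftCell, Prod.ext_iff, and_true, or_true,
    iff_true] at hx hy ⊢ <;> omega

lemma lltInv_eq_add (h : IsDomino s x y) (lam : List SkewShape) (w : List ℕ) :
    lltInv ([cellC 1, cellC 2] ++ lam) w = lltInv ([s] ++ lam) w +
      if lltEntry ([cellC 1, cellC 2] ++ lam) w cellOne <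
        lltEntry ([cellC 1, cellC 2] ++ lam) w cellTwo then 1 else 0 := by
  have hprod : ((tCells ([s] ++ lam)).product (tCells ([s] ++ lam))).map
      (Prod.map (relabel x y) (relabel x y)) ~
        (tCells ([cellC 1, cellC 2] ++ lam)).product (tCells ([cellC 1, cellC 2] ++ lam)) := by
    rw [← product_map]
    exact (h.map_relabel_perm lam).product (h.map_relabel_perm lam)
  have hyx : (y, x) ∈ (tCells ([s] ++ lam)).product (tCells ([s] ++ lam)) :=
    mem_product.2 ⟨h.mem_tCells_append.2 (.inr (.inl rfl)), h.mem_tCells_append.2 (.inl rfl)⟩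
  have hyx_inv : ¬ InvPair y x := by simp [InvPair, h.fst_eq_zero]
  rw [lltInv_eq_countP_invPair, lltInv_eq_countP_invPair, ← hprod.countP_eq, countP_map]
  refine (countP_eq_countP_add_of_eq_of_ne (a := (y, x))
    (q := fun p => decide (lltEntry ([s] ++ lam) w p.2 < lltEntry ([s] ++ lam) w p.1 ∧
      InvPair p.1 p.2)) (by simp [hyx_inv]) ?_).trans ?_
  · rintro ⟨u, v⟩ huv hne
    obtain ⟨hu, hv⟩ := mem_product.1 huv
    simp only [Function.comp_apply, Prod.map_apply, h.lltEntry_relabel lam w hu,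
      h.lltEntry_relabel lam w hv, h.invPair_relabel hu hv, decide_eq_decide]
    simp only [ne_eq, Prod.mk.injEq] at hne
    tauto
  · have hcount : ((tCells ([s] ++ lam)).product (tCells ([s] ++ lam))).count (y, x) = 1 :=
      count_eq_one_of_mem ((tCells_nodup _).product (tCells_nodup _)) hyx
    rw [hcount]
    simp [relabel_left x y, h.relabel_snd, InvPair, cellOne, cellTwo, contentOf]
    congr

lemma lltSize_eq (h : IsDomino s x y) (lam : List SkewShape) :
    lltSize ([s] ++ lam) = lltSize ([cellC 1, cellC 2] ++ lam) := by
  simpa [lltSize] using (h.map_relabel_perm lam).length_eq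

lemma lltStandard_iff (h : IsDomino s x y) (lam : List SkewShape) (w : List ℕ) :
    lltStandard ([s] ++ lam) w ↔
      IsStandardFilling [s] (lltEntry ([s] ++ lam) w) ∧
        lltStandard ([cellC 1, cellC 2] ++ lam) w := by
  rw [lltStandard_iff_isStandardFilling, isStandardFilling_append, lltStandard_cellC_pair_iff]
  refine and_congr_right' (isStandardFilling_congr fun t ht => ?_)
  have hmem := h.mem_tCells_append.2 (.inr (.inr ⟨t, ht, rfl⟩))
  simp only [Function.comp_apply, length_singleton, ← h.lltEntry_relabel lam w hmem,
    h.relabel_shiftCell]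

end IsDomino

lemma isDomino_vertical : IsDomino (ribbonR 1 1 {2}) (0, 3, 2) (0, 4, 2) :=
  ⟨.of_eq (by decide), by decide, by decide⟩

lemma isDomino_horizontal : IsDomino (ribbonR 1 1 ∅) (0, 3, 2) (0, 3, 1) :=
  ⟨(Perm.of_eq (by decide)).trans (.swap _ _ _), by decide, by decide⟩

lemma isStandardFilling_vertical (e : Cell → ℕ) :
    IsStandardFilling [ribbonR 1 1 {2}] e ↔ e (0, 3, 2) < e (0, 4, 2) := by
  have : tCells [ribbonR 1 1 {2}] = [(0, 3, 2), (0, 4, 2)] := by decide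
  simp [IsStandardFilling, this]

lemma isStandardFilling_horizontal (e : Cell → ℕ) :
    IsStandardFilling [ribbonR 1 1 ∅] e ↔ e (0, 3, 1) < e (0, 3, 2) := by
  have : tCells [ribbonR 1 1 ∅] = [(0, 3, 1), (0, 3, 2)] := by decide
  simp [IsStandardFilling, this]

lemma lltStandard_vertical_iff (lam : List SkewShape) (w : List ℕ) :
    lltStandard ([ribbonR 1 1 {2}] ++ lam) w ↔
      lltEntry ([cellC 1, cellC 2] ++ lam) w cellOne <
        lltEntry ([cellC 1, cellC 2] ++ lam) w cellTwo ∧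
      lltStandard ([cellC 1, cellC 2] ++ lam) w := by
  rw [isDomino_vertical.lltStandard_iff, isStandardFilling_vertical,
    isDomino_vertical.lltEntry_fst, isDomino_vertical.lltEntry_snd]

lemma lltStandard_horizontal_iff (lam : List SkewShape) (w : List ℕ) :
    lltStandard ([ribbonR 1 1 ∅] ++ lam) w ↔
      lltEntry ([cellC 1, cellC 2] ++ lam) w cellTwo <
        lltEntry ([cellC 1, cellC 2] ++ lam) w cellOne ∧
      lltStandard ([cellC 1, cellC 2] ++ lam) w := by
  rw [isDomino_horizontal.lltStandard_iff, isStandardFilling_horizontal,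
    isDomino_horizontal.lltEntry_fst, isDomino_horizontal.lltEntry_snd]

def lltTerm (ν : List SkewShape) (w : List ℕ) : MvPowerSeries ℕ Fqt :=
  if lltStandard ν w then qv ^ lltInv ν w • FQS (lltSize ν) (iDes w) else 0

lemma LLTpoly_eq_sum_lltTerm (ν : List SkewShape) :
    LLTpoly ν = ((PermWords (lltSize ν)).map (lltTerm ν)).sum := by
  unfold LLTpoly lltTerm
  rw [sum_map_ite]
  simp

lemma lltTerm_cellC_pair (lam : List SkewShape) {w : List ℕ}
    (hw : w ∈ PermWords (lltSize ([cellC 1, cellC 2] ++ lam))) :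
    lltTerm ([cellC 1, cellC 2] ++ lam) w =
      qv • lltTerm ([ribbonR 1 1 {2}] ++ lam) w + lltTerm ([ribbonR 1 1 ∅] ++ lam) w := by
  have hmem : ∀ u ∈ [cellOne, cellTwo], u ∈ tCells ([cellC 1, cellC 2] ++ lam) := by
    rw [tCells_append, tCells_cellC_pair]
    simp
  have hne : lltEntry ([cellC 1, cellC 2] ++ lam) w cellOne ≠
      lltEntry ([cellC 1, cellC 2] ++ lam) w cellTwo := fun he =>
    absurd (lltEntry_injOn hw (hmem _ (by simp)) (hmem _ (by simp)) he) (by decide)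
  unfold lltTerm
  rw [isDomino_vertical.lltSize_eq, isDomino_horizontal.lltSize_eq, lltStandard_vertical_iff,
    lltStandard_horizontal_iff]
  by_cases hC : lltStandard ([cellC 1, cellC 2] ++ lam) w
  · rcases hne.lt_or_gt with hlt | hgt
    · rw [isDomino_vertical.lltInv_eq_add, if_pos hlt]
      simp only [hC, hlt, hlt.not_gt, and_self, false_and, if_true, if_false, add_zero,
        pow_succ', mul_smul]
    · rw [isDomino_horizontal.lltInv_eq_add, if_neg hgt.not_gt]
      simp only [hC, hgt, hgt.not_gt, and_self, false_and, if_true, if_false, add_zero,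
        smul_zero, zero_add]
  · simp only [hC, and_false, if_false, smul_zero, add_zero]

end LLT

/-- LLT equivalence `(C_1, C_2) ≡ q (V) + (H)`.
For every tuple `lam` of skew partitions,
`LLT_{((C_1,C_2),lam)} = q ⋅ LLT_{((V),lam)} + LLT_{((H),lam)}`,
where `V = R_{[1,2]}({2})`, `H = R_{[1,2]}(∅)`. -/
theorem llt_equiv_cells (lam : List SkewShape) :
    LLTpoly ([cellC 1, cellC 2] ++ lam)
      = qv • LLTpoly ([ribbonR 1 1 {2}] ++ lam) + LLTpoly ([ribbonR 1 1 ∅] ++ lam) := by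
  rw [LLT.LLTpoly_eq_sum_lltTerm, LLT.LLTpoly_eq_sum_lltTerm, LLT.LLTpoly_eq_sum_lltTerm,
    LLT.isDomino_vertical.lltSize_eq, LLT.isDomino_horizontal.lltSize_eq, List.smul_sum,
    List.map_map, ← List.sum_map_add]
  exact congrArg List.sum (List.map_congr_left fun w hw => LLT.lltTerm_cellC_pair lam hw)

end
end

section
/- Let n ≥ 2, 1 ≤ k ≤ n−1, w ∈ S_n, and let w′ = 𝒜_k(w) (so w′_s = w_s for 1 ≤ s ≤ k). (1) If w_k > w_{k+1}, then maj(w_1⋯w_{k+1}) = maj(w′_1⋯w′_k) + k and inv(w′_k w′_{k+1}⋯w′_n) = inv(w_{k+1}⋯w_n) + (n−k). (2) If w_k < w_{k+1}, then maj(w_1⋯w_{k+1}) = maj(w′_1⋯w′_k) and inv(w′_k w′_{k+1}⋯w′_n) = inv(w_{k+1}⋯w_n). -/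
open scoped BigOperators Classical

noncomputable section

/-! Since `𝒜_k` fixes `w_1⋯w_k`, the major-index identities only see the descent of `w` at `k`,
if any. For the inversions put `x = w_k` and `u = w_{k+1}⋯w_n`. If `w_{k+1} < x`, every block of
`Γ_x(u)` is a letter below `x` followed by letters above `x`; moving the first letter to the end
adds one inversion per letter above `x`, and prepending `x` adds one per letter below it, `n - k`
in all. If `w_{k+1} > x` the roles swap: each move removes one inversion per letter below `x`,
exactly the inversions that prepending `x` restores. -/

lemma invW_eq_sum_range (u : List ℕ) :
    invW u = ∑ i ∈ Finset.range u.length, ∑ j ∈ Finset.range u.length,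
      if i < j ∧ u.getD j 0 < u.getD i 0 then 1 else 0 := by
  rw [invW, Finset.card_filter, Finset.sum_product, ← Finset.Ico_add_one_right_eq_Icc,
    Finset.sum_Ico_eq_sum_range]
  refine Finset.sum_congr (by simp) fun i _ => ?_
  rw [Finset.sum_Ico_eq_sum_range]
  refine Finset.sum_congr (by simp) fun j _ => ?_
  simp [nthW]

lemma countP_eq_sum_range (p : ℕ → Bool) (l : List ℕ) :
    l.countP p = ∑ j ∈ Finset.range l.length, if p (l.getD j 0) then 1 else 0 := by
  induction l with
  | nil => simp
  | cons a t ih =>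
    rw [List.countP_cons, List.length_cons, Finset.sum_range_succ', ih]
    simp [add_comm]

lemma invW_cons (a : ℕ) (l : List ℕ) :
    invW (a :: l) = l.countP (· < a) + invW l := by
  simp only [invW_eq_sum_range, countP_eq_sum_range, List.length_cons, Finset.sum_range_succ',
    List.getD_cons_succ, List.getD_cons_zero]
  simp [add_comm]

lemma gammaGo_perm (brk : ℕ → Bool) (h : ℕ) (t : List ℕ) :
    (gammaGo brk h t).Perm (h :: t) := by
  induction t generalizing h with
  | nil => simp [gammaGo]
  | cons y ys ih =>
    rw [gammaGo]
    split
    · exact (ih y).cons h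
    · exact ((ih h).cons y).trans (List.Perm.swap h y ys)

lemma invW_gammaGo_of_lt {x h : ℕ} (t : List ℕ) (hh : h < x) (hx : x ∉ t) :
    invW (gammaGo (· < x) h t) = invW (h :: t) + t.countP (x < ·) := by
  induction t generalizing h with
  | nil => simp [gammaGo]
  | cons y ys ih =>
    obtain ⟨hyx, hx⟩ : y ≠ x ∧ x ∉ ys := by simpa [eq_comm] using hx
    rcases lt_or_gt_of_ne hyx with hy | hy
    · have := ih hy hx
      simp only [gammaGo, invW_cons, List.countP_cons, (gammaGo_perm _ y ys).countP_eq, hy,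
        hy.not_gt, decide_true, decide_false, Bool.false_eq_true, if_true, if_false] at this ⊢
      omega
    · have := ih hh hx
      simp only [gammaGo, invW_cons, List.countP_cons, (gammaGo_perm _ h ys).countP_eq, hy,
        hy.not_gt, hh.trans hy, (hh.trans hy).not_gt, decide_true, decide_false,
        Bool.false_eq_true, if_true, if_false] at this ⊢
      omega

lemma invW_gammaGo_of_gt {x h : ℕ} (t : List ℕ) (hh : x < h) (hx : x ∉ t) :
    invW (gammaGo (x < ·) h t) + t.countP (· < x) = invW (h :: t) := by
  induction t generalizing h with
  | nil => simp [gammaGo]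
  | cons y ys ih =>
    obtain ⟨hyx, hx⟩ : y ≠ x ∧ x ∉ ys := by simpa [eq_comm] using hx
    rcases lt_or_gt_of_ne hyx with hy | hy
    · have := ih hh hx
      simp only [gammaGo, invW_cons, List.countP_cons, (gammaGo_perm _ h ys).countP_eq, hy,
        hy.not_gt, hy.trans hh, (hy.trans hh).not_gt, decide_true, decide_false,
        Bool.false_eq_true, if_true, if_false] at this ⊢
      omega
    · have := ih hy hx
      simp only [gammaGo, invW_cons, List.countP_cons, (gammaGo_perm _ y ys).countP_eq, hy,
        hy.not_gt, decide_true, decide_false, Bool.false_eq_true, if_true, if_false] at this ⊢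
      omega

lemma countP_lt_add_countP_gt {x : ℕ} {t : List ℕ} (hx : x ∉ t) :
    t.countP (· < x) + t.countP (x < ·) = t.length := by
  rw [List.length_eq_countP_add_countP (· < x)]
  congr 1
  refine List.countP_congr fun y hy => ?_
  have : y ≠ x := fun h => hx (h ▸ hy)
  simp only [decide_eq_true_eq, not_lt]
  omega

lemma invW_cons_gammaX_of_lt {x h : ℕ} {t : List ℕ} (hh : h < x) (hx : x ∉ t) :
    invW (x :: gammaX x (h :: t)) = invW (h :: t) + (h :: t).length := by
  have hγ : gammaX x (h :: t) = gammaGo (· < x) h t := by simp [gammaX, hh]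
  rw [hγ, invW_cons, (gammaGo_perm _ h t).countP_eq, invW_gammaGo_of_lt t hh hx,
    List.countP_cons_of_pos (by simpa using hh), List.length_cons, ← countP_lt_add_countP_gt hx]
  ring

lemma invW_cons_gammaX_of_gt {x h : ℕ} {t : List ℕ} (hh : x < h) (hx : x ∉ t) :
    invW (x :: gammaX x (h :: t)) = invW (h :: t) := by
  have hγ : gammaX x (h :: t) = gammaGo (x < ·) h t := by simp [gammaX, hh.not_gt]
  rw [hγ, invW_cons, (gammaGo_perm _ h t).countP_eq, ← invW_gammaGo_of_gt t hh hx,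
    List.countP_cons_of_neg (by simpa using hh.le), add_comm]

lemma nthW_take {w : List ℕ} {s t : ℕ} (hs : 0 < s) (hst : s ≤ t) :
    nthW (w.take t) s = nthW w s := by
  simp [nthW, List.getD_eq_getElem?_getD, show s - 1 < t by omega]

lemma take_eq_take_pred_append_nthW {w : List ℕ} {k : ℕ} (hk : 0 < k) (hkw : k ≤ w.length) :
    w.take k = w.take (k - 1) ++ [nthW w k] := by
  obtain ⟨j, rfl⟩ : ∃ j, k = j + 1 := ⟨k - 1, by omega⟩
  have hj : j < w.length := by omega
  simp only [List.take_add_one, List.getElem?_eq_getElem hj, Option.toList_some, nthW,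
    Nat.add_sub_cancel, List.getD_eq_getElem _ _ hj]

lemma drop_eq_nthW_cons {w : List ℕ} {k : ℕ} (hk : k < w.length) :
    w.drop k = nthW w (k + 1) :: w.drop (k + 1) := by
  rw [List.drop_eq_getElem_cons hk, nthW, Nat.add_sub_cancel, List.getD_eq_getElem _ _ hk]

lemma nthW_not_mem_drop {w : List ℕ} {k : ℕ} (hw : w.Nodup) (hk : 0 < k)
    (hkw : k ≤ w.length) :
    nthW w k ∉ w.drop k :=
  List.disjoint_take_drop hw le_rfl (by rw [take_eq_take_pred_append_nthW hk hkw]; simp)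

lemma majW_take_succ {w : List ℕ} {k : ℕ} (hk : 0 < k) (hkw : k < w.length) :
    majW (w.take (k + 1)) = majW (w.take k) + if nthW w (k + 1) < nthW w k then k else 0 := by
  obtain ⟨j, rfl⟩ : ∃ j, k = j + 1 := ⟨k - 1, by omega⟩
  have hlen : ∀ t ≤ w.length, (w.take t).length = t := fun t ht => by simp [ht]
  simp only [majW, Finset.sum_filter, hlen (j + 1 + 1) hkw, hlen (j + 1) hkw.le,
    Nat.add_sub_cancel]
  rw [Finset.sum_Icc_succ_top (by omega), nthW_take (by omega) le_rfl,
    nthW_take (by omega) (by omega)]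
  congr 1
  refine Finset.sum_congr rfl fun i hi => ?_
  have hi := Finset.mem_Icc.1 hi
  rw [nthW_take, nthW_take, nthW_take, nthW_take] <;> omega

lemma Aop_take (k : ℕ) {w : List ℕ} (hk : k ≤ w.length) : (Aop k w).take k = w.take k :=
  List.take_left' (by simp [hk])

lemma Aop_drop_pred {k : ℕ} {w : List ℕ} (hk : 0 < k) (hkw : k ≤ w.length) :
    (Aop k w).drop (k - 1) = nthW w k :: gammaX (nthW w k) (w.drop k) := by
  rw [Aop, take_eq_take_pred_append_nthW hk hkw, List.append_assoc,
    List.drop_left' (List.length_take_of_le (by omega))]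
  rfl

theorem Aop_maj_inv_general (n k : ℕ) (hk : 1 ≤ k) (hk2 : k ≤ n - 1)
    (w : List ℕ) (hw : IsPermList n w) :
    (nthW w (k + 1) < nthW w k →
      (majW (w.take (k + 1)) = majW ((Aop k w).take k) + k ∧
        invW ((Aop k w).drop (k - 1)) = invW (w.drop k) + (n - k))) ∧
    (nthW w k < nthW w (k + 1) →
      (majW (w.take (k + 1)) = majW ((Aop k w).take k) ∧
        invW ((Aop k w).drop (k - 1)) = invW (w.drop k))) := by
  have hlen : w.length = n := by simpa using hw.length_eq
  have hdrop := drop_eq_nthW_cons (w := w) (k := k) (by omega)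
  have hx : nthW w k ∉ w.drop (k + 1) := fun hmem =>
    nthW_not_mem_drop (hw.nodup_iff.2 List.nodup_range') hk (by omega)
      (hdrop ▸ List.mem_cons_of_mem _ hmem)
  rw [Aop_take k (by omega), Aop_drop_pred hk (by omega), majW_take_succ hk (by omega), hdrop]
  refine ⟨fun hlt => ⟨by rw [if_pos hlt], ?_⟩,
    fun hgt => ⟨by rw [if_neg hgt.not_gt, add_zero], ?_⟩⟩
  · rw [invW_cons_gammaX_of_lt hlt hx, ← hdrop, List.length_drop, hlen]
  · exact invW_cons_gammaX_of_gt hgt hx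

/-- Properties of Assaf's operator `𝒜_k`.
Let `w' = 𝒜_k(w)`.
(1) If `w_k > w_{k+1}` then `maj(w_1⋯w_{k+1}) = maj(w'_1⋯w'_k) + k` and
`inv(w'_k⋯w'_n) = inv(w_{k+1}⋯w_n) + (n-k)`.
(2) If `w_k < w_{k+1}` then `maj(w_1⋯w_{k+1}) = maj(w'_1⋯w'_k)` and
`inv(w'_k⋯w'_n) = inv(w_{k+1}⋯w_n)`. -/
theorem Aop_maj_inv (n k : ℕ) (hn : 2 ≤ n) (hk : 1 ≤ k) (hk2 : k ≤ n - 1)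
    (w : List ℕ) (hw : IsPermList n w) :
    (nthW w (k + 1) < nthW w k →
      (majW (w.take (k + 1)) = majW ((Aop k w).take k) + k ∧
        invW ((Aop k w).drop (k - 1)) = invW (w.drop k) + (n - k))) ∧
    (nthW w k < nthW w (k + 1) →
      (majW (w.take (k + 1)) = majW ((Aop k w).take k) ∧
        invW ((Aop k w).drop (k - 1)) = invW (w.drop k))) :=
  Aop_maj_inv_general n k hk hk2 w hw

end
end
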